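/- arXiv:1710.03015 — 11 statements merged into one kernel-verified Lean document; each statement's English description precedes it below -/
import Mathlib

section
/- For a Cauchy random variable X ~ C(a,γ) with a ≠ 0 or γ ≠ 1, the expectation of Z = X/(1+X²) equals a(a² + γ² + 1 - 2γ) / ((a² + γ² + 1)² - 4γ²); for (a,γ) = (0,1) the expectation is 0. -/
/-!
Partial fractions split `x / ((1 + x²)((x - a)² + γ²))` into terms over `1 + x²` and over
`(x - a)² + γ²`, with common denominator
`Q = (a² + γ² + 1)² - 4γ² = (a² + (γ - 1)²)(a² + (γ + 1)²)`. Their primitives are logarithms and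
arctangents; the logarithms combine into `log ((1 + x²) / ((x - a)² + γ²))`, which vanishes at
`±∞`, so only the jumps of the arctangents contribute. `Q` vanishes only at `(a, γ) = (0, 1)`,
where the integrand is odd.
-/

open MeasureTheory Real

noncomputable def cauchyPDF (a γ x : ℝ) : ℝ :=
  (1 / (π * γ)) * (γ ^ 2 / ((x - a) ^ 2 + γ ^ 2))

open Filter Topology Bornology

lemma cauchyPDF_eq_cauchyPDFReal {γ : ℝ} (hγ : 0 ≤ γ) (a : ℝ) :
    cauchyPDF a γ = ProbabilityTheory.cauchyPDFReal a γ.toNNReal := by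
  ext x
  rw [ProbabilityTheory.cauchyPDFReal_def, cauchyPDF, Real.coe_toNNReal γ hγ]
  rcases hγ.eq_or_lt with rfl | hγ
  · simp
  · field_simp

lemma cauchyPDF_zero_neg (γ x : ℝ) : cauchyPDF 0 γ (-x) = cauchyPDF 0 γ x := by
  simp [cauchyPDF]

lemma integrable_cauchyPDF {γ : ℝ} (hγ : 0 ≤ γ) (a : ℝ) : Integrable (cauchyPDF a γ) := by
  rw [cauchyPDF_eq_cauchyPDFReal hγ]
  exact ProbabilityTheory.integrable_cauchyPDFReal a

lemma abs_div_one_add_sq_le_half (x : ℝ) : |x / (1 + x ^ 2)| ≤ 1 / 2 := by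
  have h : (0 : ℝ) < 1 + x ^ 2 := by positivity
  rw [abs_div, abs_of_pos h, div_le_div_iff₀ h two_pos]
  nlinarith [sq_nonneg (|x| - 1), sq_abs x]

lemma integrable_self_div_one_add_sq_mul_cauchyPDF {γ : ℝ} (hγ : 0 ≤ γ) (a : ℝ) :
    Integrable fun x ↦ x / (1 + x ^ 2) * cauchyPDF a γ x :=
  (integrable_cauchyPDF hγ a).bdd_mul (c := 1 / 2)
    (by fun_prop : Measurable fun x : ℝ ↦ x / (1 + x ^ 2)).aestronglyMeasurable
    (ae_of_all _ abs_div_one_add_sq_le_half)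

lemma integral_odd_mul_cauchyPDF_zero {f : ℝ → ℝ} (hf : ∀ x, f (-x) = -f x) (γ : ℝ) :
    ∫ x, f x * cauchyPDF 0 γ x = 0 := by
  have h := integral_neg_eq_self (fun x ↦ f x * cauchyPDF 0 γ x) volume
  simp only [hf, cauchyPDF_zero_neg, neg_mul, integral_neg] at h
  linarith

noncomputable def logArctanPrimitive (a γ A B D x : ℝ) : ℝ :=
  A / 2 * log ((1 + x ^ 2) / ((x - a) ^ 2 + γ ^ 2)) + B * arctan x +
    D / γ * arctan ((x - a) / γ)

section LogArctanPrimitive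

variable (a : ℝ) {γ : ℝ} (A B D : ℝ)

lemma hasDerivAt_logArctanPrimitive (hγ : γ ≠ 0) (x : ℝ) :
    HasDerivAt (logArctanPrimitive a γ A B D)
      ((A * x + B) / (1 + x ^ 2) + (D - A * (x - a)) / ((x - a) ^ 2 + γ ^ 2)) x := by
  have h₁ : 0 < 1 + x ^ 2 := by positivity
  have h₂ : 0 < (x - a) ^ 2 + γ ^ 2 := by positivity
  have hnum : HasDerivAt (fun y ↦ 1 + y ^ 2) (2 * x) x := by
    simpa using (hasDerivAt_pow 2 x).const_add 1
  have hden : HasDerivAt (fun y ↦ (y - a) ^ 2 + γ ^ 2) (2 * (x - a)) x := by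
    simpa using (((hasDerivAt_id x).sub_const a).pow 2).add_const (γ ^ 2)
  have hlog := (hnum.div hden h₂.ne').log (div_pos h₁ h₂).ne'
  have harctan := (hasDerivAt_arctan ((x - a) / γ)).comp x
    (((hasDerivAt_id x).sub_const a).div_const γ)
  refine (((hlog.const_mul (A / 2)).add ((hasDerivAt_arctan x).const_mul B)).add
    (harctan.const_mul (D / γ))).congr_deriv ?_
  simp only [Pi.div_apply]
  field_simp
  ring

lemma tendsto_one_add_sq_div_cobounded :
    Tendsto (fun x : ℝ ↦ (1 + x ^ 2) / ((x - a) ^ 2 + γ ^ 2)) (cobounded ℝ) (𝓝 1) := by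
  have hinv : Tendsto (fun x : ℝ ↦ x⁻¹) (cobounded ℝ) (𝓝 0) := tendsto_inv₀_cobounded
  have hlim := ((hinv.pow 2).add_const 1).div (((hinv.const_mul a).const_sub 1).pow 2 |>.add
    ((hinv.const_mul γ).pow 2)) (by norm_num)
  rw [show ((0 : ℝ) ^ 2 + 1) / ((1 - a * 0) ^ 2 + (γ * 0) ^ 2) = 1 by norm_num] at hlim
  refine hlim.congr' ((eventually_ne_cobounded 0).mono fun x hx ↦ ?_)
  simp only [Pi.div_apply]
  field_simp

lemma tendsto_logArctanPrimitive_atTop (hγ : 0 < γ) :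
    Tendsto (logArctanPrimitive a γ A B D) atTop (𝓝 ((B + D / γ) * (π / 2))) := by
  have hlog : Tendsto (fun x ↦ log ((1 + x ^ 2) / ((x - a) ^ 2 + γ ^ 2))) atTop (𝓝 0) := by
    simpa [Function.comp_def] using ((continuousAt_log one_ne_zero).tendsto.comp
      ((tendsto_one_add_sq_div_cobounded a).mono_left IsOrderBornology.atTop_le_cobounded))
  have harctan : Tendsto arctan atTop (𝓝 (π / 2)) :=
    tendsto_arctan_atTop.mono_right nhdsWithin_le_nhds
  have haffine : Tendsto (fun x ↦ (x - a) / γ) atTop atTop :=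
    (tendsto_atTop_add_const_right _ (-a) tendsto_id).atTop_div_const hγ
  rw [show (B + D / γ) * (π / 2) = A / 2 * 0 + B * (π / 2) + D / γ * (π / 2) by ring]
  exact ((hlog.const_mul (A / 2)).add (harctan.const_mul B)).add
    ((harctan.comp haffine).const_mul (D / γ))

lemma tendsto_logArctanPrimitive_atBot (hγ : 0 < γ) :
    Tendsto (logArctanPrimitive a γ A B D) atBot (𝓝 (-((B + D / γ) * (π / 2)))) := by
  have hlog : Tendsto (fun x ↦ log ((1 + x ^ 2) / ((x - a) ^ 2 + γ ^ 2))) atBot (𝓝 0) := by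
    simpa [Function.comp_def] using ((continuousAt_log one_ne_zero).tendsto.comp
      ((tendsto_one_add_sq_div_cobounded a).mono_left IsOrderBornology.atBot_le_cobounded))
  have harctan : Tendsto arctan atBot (𝓝 (-(π / 2))) :=
    tendsto_arctan_atBot.mono_right nhdsWithin_le_nhds
  have haffine : Tendsto (fun x ↦ (x - a) / γ) atBot atBot :=
    (tendsto_atBot_add_const_right _ (-a) tendsto_id).atBot_div_const hγ
  rw [show -((B + D / γ) * (π / 2)) = A / 2 * 0 + B * -(π / 2) + D / γ * -(π / 2) by ring]
  exact ((hlog.const_mul (A / 2)).add (harctan.const_mul B)).add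
    ((harctan.comp haffine).const_mul (D / γ))

end LogArctanPrimitive

section PartialFractions

variable {a γ : ℝ}

lemma self_div_one_add_sq_mul_cauchyPDF_eq (hγ : γ ≠ 0)
    (hQ : (a ^ 2 + γ ^ 2 + 1) ^ 2 - 4 * γ ^ 2 ≠ 0) (x : ℝ) :
    x / (1 + x ^ 2) * cauchyPDF a γ x =
      γ / (π * ((a ^ 2 + γ ^ 2 + 1) ^ 2 - 4 * γ ^ 2)) *
        (((a ^ 2 + γ ^ 2 - 1) * x + -2 * a) / (1 + x ^ 2) +
          (a * (a ^ 2 + γ ^ 2 + 1) - (a ^ 2 + γ ^ 2 - 1) * (x - a)) /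
            ((x - a) ^ 2 + γ ^ 2)) := by
  have h₁ : 0 < 1 + x ^ 2 := by positivity
  have h₂ : 0 < (x - a) ^ 2 + γ ^ 2 := by positivity
  simp only [cauchyPDF]
  set Q := (a ^ 2 + γ ^ 2 + 1) ^ 2 - 4 * γ ^ 2
  field_simp
  ring

lemma integral_self_div_one_add_sq_mul_cauchyPDF (hγ : 0 < γ)
    (hQ : (a ^ 2 + γ ^ 2 + 1) ^ 2 - 4 * γ ^ 2 ≠ 0) :
    ∫ x, x / (1 + x ^ 2) * cauchyPDF a γ x =
      a * (a ^ 2 + γ ^ 2 + 1 - 2 * γ) / ((a ^ 2 + γ ^ 2 + 1) ^ 2 - 4 * γ ^ 2) := by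
  set Q := (a ^ 2 + γ ^ 2 + 1) ^ 2 - 4 * γ ^ 2
  set c := γ / (π * Q) with hc
  set P := logArctanPrimitive a γ (a ^ 2 + γ ^ 2 - 1) (-2 * a) (a * (a ^ 2 + γ ^ 2 + 1))
  have hderiv (x : ℝ) :
      HasDerivAt (fun x ↦ c * P x) (x / (1 + x ^ 2) * cauchyPDF a γ x) x := by
    rw [self_div_one_add_sq_mul_cauchyPDF_eq hγ.ne' hQ]
    exact (hasDerivAt_logArctanPrimitive a _ _ _ hγ.ne' x).const_mul c
  rw [integral_of_hasDerivAt_of_tendsto hderiv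
    (integrable_self_div_one_add_sq_mul_cauchyPDF hγ.le a)
    ((tendsto_logArctanPrimitive_atBot a _ _ _ hγ).const_mul c)
    ((tendsto_logArctanPrimitive_atTop a _ _ _ hγ).const_mul c)]
  rw [hc]
  field_simp
  ring

end PartialFractions

/-- For `X ~ C(a,γ)` the expectation of `Z = X/(1+X²)` equals
`a(a² + γ² + 1 - 2γ) / ((a² + γ² + 1)² - 4γ²)` when `(a,γ) ≠ (0,1)`,
and equals `0` when `(a,γ) = (0,1)`. -/
theorem cauchy_expectation_self_div_one_add_sq (a γ : ℝ) (hγ : 0 < γ) :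
    ((a ≠ 0 ∨ γ ≠ 1) →
      ∫ x : ℝ, (x / (1 + x ^ 2)) * cauchyPDF a γ x =
        a * (a ^ 2 + γ ^ 2 + 1 - 2 * γ) / ((a ^ 2 + γ ^ 2 + 1) ^ 2 - 4 * γ ^ 2)) ∧
    ((a = 0 ∧ γ = 1) → ∫ x : ℝ, (x / (1 + x ^ 2)) * cauchyPDF a γ x = 0) := by
  refine ⟨fun h ↦ integral_self_div_one_add_sq_mul_cauchyPDF hγ ?_, fun ⟨ha, _⟩ ↦ ?_⟩
  · rw [show (a ^ 2 + γ ^ 2 + 1) ^ 2 - 4 * γ ^ 2 =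
        (a ^ 2 + (γ - 1) ^ 2) * (a ^ 2 + (γ + 1) ^ 2) by ring]
    refine mul_ne_zero ?_ (by positivity)
    rcases h with ha | hγ₁
    · positivity
    · have := sub_ne_zero.mpr hγ₁
      positivity
  · subst ha
    exact integral_odd_mul_cauchyPDF_zero (fun x ↦ by ring) γ
end

section
/- For a Cauchy random variable X ~ C(a,γ) with a ≠ 0, the expectation of Y = 1/(1+X²) equals (γ(a² + γ² − 1) + a² − γ² + 1) / ((a² + γ² + 1)² − 4γ²). -/
open MeasureTheory Real Filter Topology

/-! Up to the factor `γ / π`, the expectation is `∫ (1 + x²)⁻¹ ((x - a)² + γ²)⁻¹`. Partial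
fractions write this integrand as a combination of `(1 + x²)⁻¹` and `((x - a)² + γ²)⁻¹`, with
integrals `π` and `π / γ`, plus a multiple of `x / (1 + x²) - (x - a) / ((x - a)² + γ²)`. The
latter is the derivative of `log ((1 + x²) / ((x - a)² + γ²)) / 2`, which tends to `0` at both
ends, so it integrates to `0`. The denominator of the formula is the partial-fraction constant
`(a² + γ² - 1)² + 4 a²`. -/

section

variable {γ : ℝ}

lemma integral_inv_sub_sq_add_sq (a : ℝ) (hγ : 0 < γ) :
    ∫ x : ℝ, ((x - a) ^ 2 + γ ^ 2)⁻¹ = π / γ := by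
  have h := ProbabilityTheory.integral_cauchyPDFReal_eq_one a (γ := γ.toNNReal) (by simpa using hγ)
  simp only [ProbabilityTheory.cauchyPDFReal_def, Real.coe_toNNReal _ hγ.le,
    integral_const_mul] at h
  field_simp at h ⊢
  linarith

lemma integrable_inv_sub_sq_add_sq (a : ℝ) (hγ : 0 < γ) :
    Integrable fun x : ℝ => ((x - a) ^ 2 + γ ^ 2)⁻¹ :=
  Integrable.of_integral_ne_zero <| by
    rw [integral_inv_sub_sq_add_sq a hγ]
    positivity

lemma hasDerivAt_half_log_sub_sq_add_sq (a : ℝ) (hγ : γ ≠ 0) (x : ℝ) :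
    HasDerivAt (fun x => log ((x - a) ^ 2 + γ ^ 2) / 2) ((x - a) / ((x - a) ^ 2 + γ ^ 2)) x := by
  have hQ : HasDerivAt (fun x => (x - a) ^ 2 + γ ^ 2) (2 * (x - a)) x := by
    simpa using (((hasDerivAt_id x).sub_const a).fun_pow 2).add_const (γ ^ 2)
  exact ((hQ.log (by positivity)).div_const 2).congr_deriv (by ring)

lemma tendsto_log_one_add_sq_sub_log_cobounded (a : ℝ) (hγ : γ ≠ 0) :
    Tendsto (fun x => log (1 + x ^ 2) - log ((x - a) ^ 2 + γ ^ 2)) (Bornology.cobounded ℝ)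
      (𝓝 0) := by
  -- the ratio of the two quadratics, written in `t = x⁻¹`
  set φ : ℝ → ℝ := fun t => (t ^ 2 + 1) / ((1 - a * t) ^ 2 + γ ^ 2 * t ^ 2)
  have hφ : ContinuousAt φ 0 := ContinuousAt.div (by fun_prop) (by fun_prop) (by norm_num)
  have hφ0 : φ 0 = 1 := by norm_num [φ]
  have hratio : Tendsto (fun x : ℝ => (1 + x ^ 2) / ((x - a) ^ 2 + γ ^ 2))
      (Bornology.cobounded ℝ) (𝓝 1) := by
    have h := hφ.tendsto.comp tendsto_inv₀_cobounded
    rw [hφ0] at h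
    refine h.congr' ?_
    filter_upwards [Bornology.eventually_ne_cobounded 0] with x hx
    simp only [Function.comp_apply, φ]
    rw [← div_div_div_cancel_right₀ (pow_ne_zero 2 hx) (1 + x ^ 2)]
    congr 1 <;> field_simp
  have hlog := (continuousAt_log one_ne_zero).tendsto.comp hratio
  rw [log_one] at hlog
  exact hlog.congr fun x => log_div (by positivity) (by positivity)

lemma integrable_div_one_add_sq_sub_div (a : ℝ) (hγ : 0 < γ) :
    Integrable fun x : ℝ => x / (1 + x ^ 2) - (x - a) / ((x - a) ^ 2 + γ ^ 2) := by
  refine ((integrable_inv_sub_sq_add_sq a hγ).const_mul (|a| + |a ^ 2 + γ ^ 2 - 1|)).mono'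
    (by fun_prop) (ae_of_all _ fun x => ?_)
  have hP : 0 < 1 + x ^ 2 := by positivity
  have hQ : 0 < (x - a) ^ 2 + γ ^ 2 := by positivity
  have hD : x / (1 + x ^ 2) - (x - a) / ((x - a) ^ 2 + γ ^ 2) =
      (-a * x ^ 2 + (a ^ 2 + γ ^ 2 - 1) * x + a) / ((1 + x ^ 2) * ((x - a) ^ 2 + γ ^ 2)) := by
    field_simp
    ring
  have hN : |-a * x ^ 2 + (a ^ 2 + γ ^ 2 - 1) * x + a| ≤
      (|a| + |a ^ 2 + γ ^ 2 - 1|) * (1 + x ^ 2) := by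
    have hx : |x| ≤ 1 + x ^ 2 := by nlinarith [abs_nonneg x, sq_abs x, sq_nonneg (|x| - 1)]
    calc |-a * x ^ 2 + (a ^ 2 + γ ^ 2 - 1) * x + a|
        ≤ |-a * x ^ 2| + |(a ^ 2 + γ ^ 2 - 1) * x| + |a| := abs_add_three _ _ _
      _ = |a| * x ^ 2 + |a ^ 2 + γ ^ 2 - 1| * |x| + |a| := by
          rw [abs_mul, abs_mul, abs_neg, abs_of_nonneg (sq_nonneg x)]
      _ ≤ (|a| + |a ^ 2 + γ ^ 2 - 1|) * (1 + x ^ 2) := by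
          nlinarith [mul_le_mul_of_nonneg_left hx (abs_nonneg (a ^ 2 + γ ^ 2 - 1)), abs_nonneg a]
  rw [Real.norm_eq_abs, hD, abs_div, abs_of_pos (mul_pos hP hQ), div_le_iff₀ (mul_pos hP hQ)]
  calc _ ≤ (|a| + |a ^ 2 + γ ^ 2 - 1|) * (1 + x ^ 2) := hN
    _ = _ := by field_simp

lemma integral_div_one_add_sq_sub_div (a : ℝ) (hγ : 0 < γ) :
    ∫ x : ℝ, (x / (1 + x ^ 2) - (x - a) / ((x - a) ^ 2 + γ ^ 2)) = 0 := by
  have hderiv (x : ℝ) : HasDerivAt (fun x => log (1 + x ^ 2) / 2 - log ((x - a) ^ 2 + γ ^ 2) / 2)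
      (x / (1 + x ^ 2) - (x - a) / ((x - a) ^ 2 + γ ^ 2)) x := by
    have h := (hasDerivAt_half_log_sub_sq_add_sq 0 one_ne_zero x).sub
      (hasDerivAt_half_log_sub_sq_add_sq a hγ.ne' x)
    simp only [sub_zero, one_pow, add_comm _ (1 : ℝ)] at h
    exact h
  have hlim := (tendsto_log_one_add_sq_sub_log_cobounded a hγ.ne').div_const 2
  simp only [sub_div, zero_div] at hlim
  simpa using integral_of_hasDerivAt_of_tendsto hderiv (integrable_div_one_add_sq_sub_div a hγ)
    (hlim.mono_left IsOrderBornology.atBot_le_cobounded)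
    (hlim.mono_left IsOrderBornology.atTop_le_cobounded)

lemma inv_one_add_sq_mul_inv_sub_sq_add_sq (a x : ℝ) (hγ : γ ≠ 0) :
    ((a ^ 2 + γ ^ 2 - 1) ^ 2 + 4 * a ^ 2) * ((1 + x ^ 2)⁻¹ * ((x - a) ^ 2 + γ ^ 2)⁻¹) =
      (a ^ 2 + γ ^ 2 - 1) * (1 + x ^ 2)⁻¹ + (a ^ 2 - γ ^ 2 + 1) * ((x - a) ^ 2 + γ ^ 2)⁻¹ +
        2 * a * (x / (1 + x ^ 2) - (x - a) / ((x - a) ^ 2 + γ ^ 2)) := by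
  have hQ : (x - a) ^ 2 + γ ^ 2 ≠ 0 := by positivity
  field_simp
  ring

lemma integral_inv_one_add_sq_mul_inv_sub_sq_add_sq (a : ℝ) (hγ : 0 < γ) :
    ((a ^ 2 + γ ^ 2 - 1) ^ 2 + 4 * a ^ 2) * ∫ x : ℝ, (1 + x ^ 2)⁻¹ * ((x - a) ^ 2 + γ ^ 2)⁻¹ =
      π * (a ^ 2 + γ ^ 2 - 1) + π / γ * (a ^ 2 - γ ^ 2 + 1) := by
  have hP := integrable_inv_one_add_sq.const_mul (a ^ 2 + γ ^ 2 - 1)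
  have hQ := (integrable_inv_sub_sq_add_sq a hγ).const_mul (a ^ 2 - γ ^ 2 + 1)
  have hD := (integrable_div_one_add_sq_sub_div a hγ).const_mul (2 * a)
  rw [← integral_const_mul]
  simp_rw [inv_one_add_sq_mul_inv_sub_sq_add_sq a _ hγ.ne']
  rw [integral_add (hP.fun_add hQ) hD, integral_add hP hQ, integral_const_mul, integral_const_mul,
    integral_const_mul, integral_univ_inv_one_add_sq, integral_inv_sub_sq_add_sq a hγ,
    integral_div_one_add_sq_sub_div a hγ]
  ring

end

/-- For `X ~ C(a,γ)` with `a ≠ 0`, the expectation of `Y = 1/(1+X²)` equals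
`(γ(a² + γ² − 1) + a² − γ² + 1) / ((a² + γ² + 1)² − 4γ²)`. -/
theorem cauchy_expectation_one_div_one_add_sq (a γ : ℝ) (hγ : 0 < γ) (ha : a ≠ 0) :
    ∫ x : ℝ, (1 / (1 + x ^ 2)) * cauchyPDF a γ x =
      (γ * (a ^ 2 + γ ^ 2 - 1) + a ^ 2 - γ ^ 2 + 1) /
        ((a ^ 2 + γ ^ 2 + 1) ^ 2 - 4 * γ ^ 2) := by
  have hK : (a ^ 2 + γ ^ 2 + 1) ^ 2 - 4 * γ ^ 2 = (a ^ 2 + γ ^ 2 - 1) ^ 2 + 4 * a ^ 2 := by ring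
  have hpdf (x : ℝ) : 1 / (1 + x ^ 2) * cauchyPDF a γ x =
      γ / π * ((1 + x ^ 2)⁻¹ * ((x - a) ^ 2 + γ ^ 2)⁻¹) := by
    unfold cauchyPDF
    field_simp
  simp_rw [hpdf]
  rw [integral_const_mul, hK, eq_div_iff (by positivity), mul_assoc, mul_comm _ (_ + _),
    integral_inv_one_add_sq_mul_inv_sub_sq_add_sq a hγ]
  field_simp
  ring
end

section
/- Let X ~ C(a,γ), a₀ ∈ ℝ, γ₀ > 0, and set X₀ = (X - a₀)/γ₀. Then E(1/(1+X₀²)) = γ₀(γ + γ₀) / ((a - a₀)² + (γ + γ₀)²) and E(X₀/(1+X₀²)) = γ₀(a - a₀) / ((a - a₀)² + (γ + γ₀)²). -/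
/-!
Each expectation is an integral `∫ (p (x - a₀) + q) / (((x - a)² + γ²) ((x - a₀)² + γ₀²))`.
Partial fractions give an antiderivative made of `log ((x - a)² + γ²) - log ((x - a₀)² + γ₀²)`,
which vanishes at `±∞`, and the two arctangents `arctan ((x - a) / γ)`, `arctan ((x - a₀) / γ₀)`,
which jump by `π`. When `(a, γ) = (a₀, γ₀)` the partial fractions degenerate and the rational
function `(x - a) / ((x - a)² + γ²)` takes the place of the logarithms.
-/

open MeasureTheory Real

open Filter Topology Bornology

lemma tendsto_linear_div_sq_add_sq (p q b : ℝ) {δ : ℝ} (hδ : δ ≠ 0) :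
    Tendsto (fun x => (p * (x - b) + q) / ((x - b) ^ 2 + δ ^ 2)) (cobounded ℝ) (𝓝 0) := by
  -- substitute `u = x⁻¹`
  have hcont : ContinuousAt
      (fun u : ℝ => u * (p * (1 - b * u) + q * u) / ((1 - b * u) ^ 2 + (δ * u) ^ 2)) 0 :=
    ContinuousAt.div (by fun_prop) (by fun_prop) (by simp)
  have h0 := hcont.tendsto.comp tendsto_inv₀_cobounded
  simp only [Function.comp_def, mul_zero, zero_mul, zero_div] at h0
  refine h0.congr' ?_
  filter_upwards [eventually_ne_cobounded 0] with x hx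
  field_simp

lemma tendsto_log_sub_log_sq_add_sq (a b : ℝ) {γ δ : ℝ} (hγ : γ ≠ 0) (hδ : δ ≠ 0) :
    Tendsto (fun x => log ((x - a) ^ 2 + γ ^ 2) - log ((x - b) ^ 2 + δ ^ 2))
      (cobounded ℝ) (𝓝 0) := by
  have hratio : Tendsto (fun x => ((x - a) ^ 2 + γ ^ 2) / ((x - b) ^ 2 + δ ^ 2))
      (cobounded ℝ) (𝓝 1) := by
    have h := (tendsto_linear_div_sq_add_sq (2 * (b - a)) ((b - a) ^ 2 + γ ^ 2 - δ ^ 2) b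
      hδ).const_add 1
    rw [add_zero] at h
    refine h.congr fun x => ?_
    field_simp
    ring
  have hlog := (continuousAt_log one_ne_zero).tendsto.comp hratio
  rw [log_one] at hlog
  refine hlog.congr fun x => ?_
  exact log_div (by positivity) (by positivity)

lemma tendsto_arctan_sub_div_atTop (a : ℝ) {γ : ℝ} (hγ : 0 < γ) :
    Tendsto (fun x => arctan ((x - a) / γ)) atTop (𝓝 (π / 2)) :=
  (tendsto_nhds_of_tendsto_nhdsWithin tendsto_arctan_atTop).comp
    ((tendsto_atTop_add_const_right _ (-a) tendsto_id).atTop_div_const hγ)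

lemma tendsto_arctan_sub_div_atBot (a : ℝ) {γ : ℝ} (hγ : 0 < γ) :
    Tendsto (fun x => arctan ((x - a) / γ)) atBot (𝓝 (-(π / 2))) :=
  (tendsto_nhds_of_tendsto_nhdsWithin tendsto_arctan_atBot).comp
    ((tendsto_atBot_add_const_right _ (-a) tendsto_id).atBot_div_const hγ)

lemma integrable_inv_sq_add_sq (a : ℝ) {γ : ℝ} (hγ : γ ≠ 0) :
    Integrable (fun x => ((x - a) ^ 2 + γ ^ 2)⁻¹) := by
  refine (((integrable_inv_one_add_sq.comp_div hγ).comp_sub_right a).const_mul (γ ^ 2)⁻¹).congr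
    (Eventually.of_forall fun x => ?_)
  field_simp
  ring

lemma integrable_linear_div_sq_add_sq_mul_sq_add_sq (p q a b : ℝ) {γ δ : ℝ} (hγ : γ ≠ 0)
    (hδ : δ ≠ 0) :
    Integrable (fun x => (p * (x - b) + q) / (((x - a) ^ 2 + γ ^ 2) * ((x - b) ^ 2 + δ ^ 2))) := by
  set g : ℝ → ℝ := fun x => (p * (x - b) + q) / ((x - b) ^ 2 + δ ^ 2)
  have hg : Continuous g :=
    Continuous.div (by fun_prop) (by fun_prop) fun x => by positivity
  have hg_lim : Tendsto g (cocompact ℝ) (𝓝 0) := by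
    rw [← Metric.cobounded_eq_cocompact]
    exact tendsto_linear_div_sq_add_sq p q b hδ
  obtain ⟨C, hC⟩ := isBounded_iff_forall_norm_le.1
    (ZeroAtInftyContinuousMap.isBounded_range ⟨⟨g, hg⟩, hg_lim⟩)
  refine ((integrable_inv_sq_add_sq a hγ).bdd_mul hg.aestronglyMeasurable
    (Eventually.of_forall fun x => hC _ ⟨x, rfl⟩)).congr (Eventually.of_forall fun x => ?_)
  simp only [g, ← div_eq_mul_inv, div_div, mul_comm]

lemma hasDerivAt_sq_add_sq (a γ x : ℝ) :
    HasDerivAt (fun y => (y - a) ^ 2 + γ ^ 2) (2 * (x - a)) x := by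
  simpa using (((hasDerivAt_id x).sub_const a).pow 2).add_const (γ ^ 2)

lemma hasDerivAt_arctan_sub_div (a : ℝ) {γ : ℝ} (hγ : γ ≠ 0) (x : ℝ) :
    HasDerivAt (fun y => arctan ((y - a) / γ)) (γ / ((x - a) ^ 2 + γ ^ 2)) x := by
  have h : HasDerivAt (fun y => (y - a) / γ) (1 / γ) x :=
    ((hasDerivAt_id' x).sub_const a).div_const γ
  convert h.arctan using 1
  field_simp
  ring

lemma hasDerivAt_linear_div_sq_add_sq (c d a : ℝ) {γ : ℝ} (hγ : γ ≠ 0) (x : ℝ) :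
    HasDerivAt (fun y => (c * (y - a) + d) / ((y - a) ^ 2 + γ ^ 2))
      ((c * ((x - a) ^ 2 + γ ^ 2) - (c * (x - a) + d) * (2 * (x - a))) /
        ((x - a) ^ 2 + γ ^ 2) ^ 2) x := by
  have h : HasDerivAt (fun y => c * (y - a) + d) c x := by
    simpa using (((hasDerivAt_id' x).sub_const a).const_mul c).add_const d
  exact h.div (hasDerivAt_sq_add_sq a γ x) (by positivity)

lemma integral_linear_div_sq_add_sq_mul_sq_add_sq_of_ne (p q a b : ℝ) {γ δ : ℝ} (hγ : 0 < γ)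
    (hδ : 0 < δ) (hne : (a - b) ^ 2 + (γ - δ) ^ 2 ≠ 0) :
    ∫ x, (p * (x - b) + q) / (((x - a) ^ 2 + γ ^ 2) * ((x - b) ^ 2 + δ ^ 2)) =
      π * (q * (γ + δ) + p * δ * (a - b)) / (γ * δ * ((a - b) ^ 2 + (γ + δ) ^ 2)) := by
  set D := ((a - b) ^ 2 + (γ + δ) ^ 2) * ((a - b) ^ 2 + (γ - δ) ^ 2)
  have hD : D ≠ 0 := mul_ne_zero (by positivity) hne
  set A := p * (δ ^ 2 - γ ^ 2 - (a - b) ^ 2) - 2 * (a - b) * q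
  set B := (p * (a - b) + q) * ((a - b) ^ 2 + δ ^ 2 - γ ^ 2) + 2 * (a - b) * p * γ ^ 2
  set B' := q * ((a - b) ^ 2 + γ ^ 2 - δ ^ 2) - 2 * (a - b) * p * δ ^ 2
  have hpartial : ∀ x, D * (p * (x - b) + q) =
      A * (x - a) * ((x - b) ^ 2 + δ ^ 2) - A * (x - b) * ((x - a) ^ 2 + γ ^ 2) +
        B * ((x - b) ^ 2 + δ ^ 2) + B' * ((x - a) ^ 2 + γ ^ 2) := fun x => by ring
  set F : ℝ → ℝ := fun x => (A / 2 * (log ((x - a) ^ 2 + γ ^ 2) - log ((x - b) ^ 2 + δ ^ 2)) +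
    B / γ * arctan ((x - a) / γ) + B' / δ * arctan ((x - b) / δ)) / D
  have hF : ∀ x, HasDerivAt F
      ((p * (x - b) + q) / (((x - a) ^ 2 + γ ^ 2) * ((x - b) ^ 2 + δ ^ 2))) x := fun x => by
    have hP : (x - a) ^ 2 + γ ^ 2 ≠ 0 := by positivity
    have hQ : (x - b) ^ 2 + δ ^ 2 ≠ 0 := by positivity
    have h := (((((hasDerivAt_sq_add_sq a γ x).log hP).sub
      ((hasDerivAt_sq_add_sq b δ x).log hQ)).const_mul (A / 2)).add
      ((hasDerivAt_arctan_sub_div a hγ.ne' x).const_mul (B / γ))).add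
      ((hasDerivAt_arctan_sub_div b hδ.ne' x).const_mul (B' / δ))
    refine (h.div_const D).congr_deriv ?_
    field_simp
    linear_combination 2 * hpartial x
  have htop : Tendsto F atTop (𝓝 ((A / 2 * 0 + B / γ * (π / 2) + B' / δ * (π / 2)) / D)) :=
    (((((tendsto_log_sub_log_sq_add_sq a b hγ.ne' hδ.ne').mono_left
      IsOrderBornology.atTop_le_cobounded).const_mul _).add
      ((tendsto_arctan_sub_div_atTop a hγ).const_mul _)).add
      ((tendsto_arctan_sub_div_atTop b hδ).const_mul _)).div_const D
  have hbot : Tendsto F atBot (𝓝 ((A / 2 * 0 + B / γ * -(π / 2) + B' / δ * -(π / 2)) / D)) :=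
    (((((tendsto_log_sub_log_sq_add_sq a b hγ.ne' hδ.ne').mono_left
      IsOrderBornology.atBot_le_cobounded).const_mul _).add
      ((tendsto_arctan_sub_div_atBot a hγ).const_mul _)).add
      ((tendsto_arctan_sub_div_atBot b hδ).const_mul _)).div_const D
  rw [integral_of_hasDerivAt_of_tendsto hF
    (integrable_linear_div_sq_add_sq_mul_sq_add_sq p q a b hγ.ne' hδ.ne') hbot htop]
  have hres : B * δ + B' * γ = (q * (γ + δ) + p * δ * (a - b)) * ((a - b) ^ 2 + (γ - δ) ^ 2) := by
    ring
  field_simp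
  linear_combination hres

lemma integral_linear_div_sq_add_sq_mul_self (p q a : ℝ) {γ : ℝ} (hγ : 0 < γ) :
    ∫ x, (p * (x - a) + q) / (((x - a) ^ 2 + γ ^ 2) * ((x - a) ^ 2 + γ ^ 2)) =
      π * q / (2 * γ ^ 3) := by
  set F : ℝ → ℝ := fun x => (q / (2 * γ ^ 2) * (x - a) + -(p / 2)) / ((x - a) ^ 2 + γ ^ 2) +
    q / (2 * γ ^ 3) * arctan ((x - a) / γ)
  have hF : ∀ x, HasDerivAt F
      ((p * (x - a) + q) / (((x - a) ^ 2 + γ ^ 2) * ((x - a) ^ 2 + γ ^ 2))) x := fun x => by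
    refine ((hasDerivAt_linear_div_sq_add_sq _ _ a hγ.ne' x).add
      ((hasDerivAt_arctan_sub_div a hγ.ne' x).const_mul _)).congr_deriv ?_
    field_simp
    ring
  have htop : Tendsto F atTop (𝓝 (0 + q / (2 * γ ^ 3) * (π / 2))) :=
    ((tendsto_linear_div_sq_add_sq _ _ a hγ.ne').mono_left
      IsOrderBornology.atTop_le_cobounded).add
      ((tendsto_arctan_sub_div_atTop a hγ).const_mul _)
  have hbot : Tendsto F atBot (𝓝 (0 + q / (2 * γ ^ 3) * -(π / 2))) :=
    ((tendsto_linear_div_sq_add_sq _ _ a hγ.ne').mono_left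
      IsOrderBornology.atBot_le_cobounded).add
      ((tendsto_arctan_sub_div_atBot a hγ).const_mul _)
  rw [integral_of_hasDerivAt_of_tendsto hF
    (integrable_linear_div_sq_add_sq_mul_sq_add_sq p q a a hγ.ne' hγ.ne') hbot htop]
  ring

lemma integral_linear_div_sq_add_sq_mul_sq_add_sq (p q a b : ℝ) {γ δ : ℝ} (hγ : 0 < γ)
    (hδ : 0 < δ) :
    ∫ x, (p * (x - b) + q) / (((x - a) ^ 2 + γ ^ 2) * ((x - b) ^ 2 + δ ^ 2)) =
      π * (q * (γ + δ) + p * δ * (a - b)) / (γ * δ * ((a - b) ^ 2 + (γ + δ) ^ 2)) := by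
  rcases eq_or_ne ((a - b) ^ 2 + (γ - δ) ^ 2) 0 with hdeg | hne
  · obtain ⟨rfl, rfl⟩ : a = b ∧ γ = δ := by
      simpa [add_eq_zero_iff_of_nonneg (sq_nonneg (a - b)) (sq_nonneg (γ - δ)), sub_eq_zero]
        using hdeg
    rw [integral_linear_div_sq_add_sq_mul_self p q a hγ]
    field_simp
    ring
  · exact integral_linear_div_sq_add_sq_mul_sq_add_sq_of_ne p q a b hγ hδ hne

/-- For `X ~ C(a,γ)` and `X₀ = (X - a₀)/γ₀` with `γ₀ > 0`:
`E(1/(1+X₀²)) = γ₀(γ+γ₀)/((a-a₀)² + (γ+γ₀)²)` and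
`E(X₀/(1+X₀²)) = γ₀(a-a₀)/((a-a₀)² + (γ+γ₀)²)`. -/
theorem cauchy_expectation_shifted (a γ a₀ γ₀ : ℝ) (hγ : 0 < γ) (hγ₀ : 0 < γ₀) :
    (∫ x : ℝ, (1 / (1 + ((x - a₀) / γ₀) ^ 2)) * cauchyPDF a γ x =
        γ₀ * (γ + γ₀) / ((a - a₀) ^ 2 + (γ + γ₀) ^ 2)) ∧
    (∫ x : ℝ, (((x - a₀) / γ₀) / (1 + ((x - a₀) / γ₀) ^ 2)) * cauchyPDF a γ x =
        γ₀ * (a - a₀) / ((a - a₀) ^ 2 + (γ + γ₀) ^ 2)) := by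
  have key := fun p q => integral_linear_div_sq_add_sq_mul_sq_add_sq p q a a₀ hγ hγ₀
  constructor
  · have hintegrand : (fun x => 1 / (1 + ((x - a₀) / γ₀) ^ 2) * cauchyPDF a γ x) = fun x =>
        (0 * (x - a₀) + γ * γ₀ ^ 2 / π) / (((x - a) ^ 2 + γ ^ 2) * ((x - a₀) ^ 2 + γ₀ ^ 2)) := by
      ext x
      simp only [cauchyPDF]
      field_simp
      ring
    rw [hintegrand, key]
    field_simp
    ring
  · have hintegrand : (fun x => (x - a₀) / γ₀ / (1 + ((x - a₀) / γ₀) ^ 2) * cauchyPDF a γ x) = fun x =>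
        (γ * γ₀ / π * (x - a₀) + 0) / (((x - a) ^ 2 + γ ^ 2) * ((x - a₀) ^ 2 + γ₀ ^ 2)) := by
      ext x
      simp only [cauchyPDF]
      field_simp
      ring
    rw [hintegrand, key]
    field_simp
    ring
end

section
/- Let x₁ < ... < xₙ, n ≥ 3, wᵢ ∈ (0, 1/2) with Σwᵢ = 1, and a ∈ ℝ fixed. Then the function γ ↦ S₀(a,γ) := Σᵢ wᵢ γ²/((xᵢ-a)² + γ²) is strictly increasing in γ on (0,∞), satisfies lim_{γ→0} S₀(a,γ) < 1/2 and lim_{γ→∞} S₀(a,γ) = 1, and hence the equation S₀(a,γ) = 1/2 has a unique solution γ̂ > 0. -/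
open Finset Real Filter

/-!
Each summand `wᵢ γ² / ((xᵢ - a)² + γ²)` is nondecreasing in `γ > 0`, strictly so when `xᵢ ≠ a`,
tends to `wᵢ` as `γ → ∞`, and as `γ → 0⁺` tends to `wᵢ` if `xᵢ = a` and to `0` otherwise.
Since the `xᵢ` are distinct, at most one of them equals `a`, so the limit at `0⁺` is
below `1/2`; as the weights sum to `1`, this also forces some `xᵢ ≠ a`, which gives strict
monotonicity. Continuity and the intermediate value theorem then yield exactly one root of
`S₀(a, ·) = 1/2`.
-/

open Set Topology

/-- `S₀(a, γ)`. -/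
noncomputable def scaleSum {ι : Type*} [Fintype ι] (x w : ι → ℝ) (a γ : ℝ) : ℝ :=
  ∑ i, w i * γ ^ 2 / ((x i - a) ^ 2 + γ ^ 2)

theorem monotoneOn_mul_sq_div_sq_add_sq {w : ℝ} (hw : 0 ≤ w) (d : ℝ) :
    MonotoneOn (fun γ : ℝ => w * γ ^ 2 / (d ^ 2 + γ ^ 2)) (Ioi 0) := by
  intro γ₁ (h₁ : 0 < γ₁) γ₂ (h₂ : 0 < γ₂) h
  have hsq : γ₁ ^ 2 ≤ γ₂ ^ 2 := pow_le_pow_left₀ h₁.le h 2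
  dsimp only
  rw [div_le_div_iff₀ (by positivity) (by positivity)]
  nlinarith [mul_nonneg (mul_nonneg hw (sq_nonneg d)) (sub_nonneg.2 hsq)]

theorem strictMonoOn_mul_sq_div_sq_add_sq {w d : ℝ} (hw : 0 < w) (hd : d ≠ 0) :
    StrictMonoOn (fun γ : ℝ => w * γ ^ 2 / (d ^ 2 + γ ^ 2)) (Ici 0) := by
  intro γ₁ (h₁ : 0 ≤ γ₁) γ₂ (h₂ : 0 ≤ γ₂) h
  have hsq : γ₁ ^ 2 < γ₂ ^ 2 := pow_lt_pow_left₀ h h₁ two_ne_zero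
  dsimp only
  rw [div_lt_div_iff₀ (by positivity) (by positivity)]
  nlinarith [mul_pos (mul_pos hw (by positivity : 0 < d ^ 2)) (sub_pos.2 hsq)]

theorem tendsto_mul_sq_div_sq_add_sq_nhdsGT_zero (w d : ℝ) :
    Tendsto (fun γ : ℝ => w * γ ^ 2 / (d ^ 2 + γ ^ 2)) (𝓝[>] 0) (𝓝 (if d = 0 then w else 0)) := by
  split_ifs with hd
  · refine tendsto_const_nhds.congr' ?_
    filter_upwards [self_mem_nhdsWithin] with γ (hγ : 0 < γ)
    subst hd
    simp [hγ.ne']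
  · have hcont : ContinuousAt (fun γ : ℝ => w * γ ^ 2 / (d ^ 2 + γ ^ 2)) 0 :=
      ContinuousAt.div (by fun_prop) (by fun_prop) (by positivity)
    simpa using hcont.tendsto.mono_left nhdsWithin_le_nhds

theorem tendsto_mul_sq_div_sq_add_sq_atTop (w d : ℝ) :
    Tendsto (fun γ : ℝ => w * γ ^ 2 / (d ^ 2 + γ ^ 2)) atTop (𝓝 w) := by
  have hdenom : Tendsto (fun γ : ℝ => d ^ 2 + γ ^ 2) atTop atTop :=
    tendsto_atTop_add_const_left _ _ (tendsto_pow_atTop two_ne_zero)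
  have hrem : Tendsto (fun γ : ℝ => w * d ^ 2 / (d ^ 2 + γ ^ 2)) atTop (𝓝 0) :=
    tendsto_const_nhds.div_atTop hdenom
  refine (sub_zero w ▸ tendsto_const_nhds.sub hrem).congr' ?_
  filter_upwards [eventually_gt_atTop 0] with γ hγ
  field_simp
  ring

section ScaleSum

variable {ι : Type*} [Fintype ι] {x w : ι → ℝ} {a : ℝ}

theorem strictMonoOn_scaleSum (hw : ∀ i, 0 ≤ w i) {i₀ : ι} (hwi₀ : 0 < w i₀) (hxi₀ : x i₀ ≠ a) :
    StrictMonoOn (scaleSum x w a) (Ioi 0) := fun _ h₁ _ h₂ h =>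
  Finset.sum_lt_sum (fun i _ => monotoneOn_mul_sq_div_sq_add_sq (hw i) _ h₁ h₂ h.le)
    ⟨i₀, mem_univ _, strictMonoOn_mul_sq_div_sq_add_sq hwi₀ (sub_ne_zero.2 hxi₀)
      (Ioi_subset_Ici_self h₁) (Ioi_subset_Ici_self h₂) h⟩

theorem continuousOn_scaleSum (x w : ι → ℝ) (a : ℝ) : ContinuousOn (scaleSum x w a) (Ioi 0) :=
  continuousOn_finsetSum _ fun i _ =>
    ContinuousOn.div (by fun_prop) (by fun_prop) fun γ (hγ : 0 < γ) => by positivity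

theorem tendsto_scaleSum_nhdsGT_zero (x w : ι → ℝ) (a : ℝ) :
    Tendsto (scaleSum x w a) (𝓝[>] 0) (𝓝 (∑ i with x i = a, w i)) := by
  simp_rw [sum_filter, ← sub_eq_zero (a := x _)]
  exact tendsto_finsetSum _ fun i _ => tendsto_mul_sq_div_sq_add_sq_nhdsGT_zero _ _

theorem tendsto_scaleSum_atTop (x w : ι → ℝ) (a : ℝ) :
    Tendsto (scaleSum x w a) atTop (𝓝 (∑ i, w i)) :=
  tendsto_finsetSum _ fun _ _ => tendsto_mul_sq_div_sq_add_sq_atTop _ _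

theorem sum_filter_eq_lt_of_injective (hx : Function.Injective x) {c : ℝ} (hc : 0 < c)
    (hw : ∀ i, w i < c) : ∑ i with x i = a, w i < c := by
  rcases (univ.filter (x · = a)).eq_empty_or_nonempty with h | ⟨j, hj⟩
  · simpa [h] using hc
  · have hj : x j = a := (mem_filter.1 hj).2
    have : univ.filter (x · = a) = {j} :=
      eq_singleton_iff_unique_mem.2 ⟨by simp [hj], fun i hi => hx ((mem_filter.1 hi).2.trans hj.symm)⟩
    simpa [this] using hw j

theorem exists_ne_of_sum_filter_eq_lt_sum (h : ∑ i with x i = a, w i < ∑ i, w i) :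
    ∃ i, x i ≠ a := by
  by_contra! hall
  rw [filter_true_of_mem fun i _ => hall i] at h
  exact h.false

end ScaleSum

theorem existsUnique_eq_of_strictMonoOn_Ioi {f : ℝ → ℝ} {b c L y : ℝ}
    (hcont : ContinuousOn f (Ioi b)) (hmono : StrictMonoOn f (Ioi b))
    (hb : Tendsto f (𝓝[>] b) (𝓝 c)) (htop : Tendsto f atTop (𝓝 L)) (hcy : c < y) (hyL : y < L) :
    ∃! t, b < t ∧ f t = y := by
  obtain ⟨t₁, ht₁y, ht₁b⟩ : ∃ t, f t < y ∧ b < t :=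
    ((hb.eventually_lt_const hcy).and self_mem_nhdsWithin).exists
  obtain ⟨t₂, hyt₂, ht₁₂⟩ : ∃ t, y < f t ∧ t₁ ≤ t :=
    ((htop.eventually_const_lt hyL).and (eventually_ge_atTop t₁)).exists
  have hsub : Icc t₁ t₂ ⊆ Ioi b := fun t ht => ht₁b.trans_le ht.1
  obtain ⟨t, ht, hft⟩ := intermediate_value_Icc ht₁₂ (hcont.mono hsub) ⟨ht₁y.le, hyt₂.le⟩
  exact ⟨t, ⟨hsub ht, hft⟩, fun s ⟨hs, hfs⟩ => hmono.injOn hs (hsub ht) (hfs.trans hft.symm)⟩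

theorem scale_equation_unique_solution_general (n : ℕ) (x : Fin n → ℝ)
    (hx : StrictMono x) (w : Fin n → ℝ) (hw : ∀ i, 0 < w i) (hwhalf : ∀ i, w i < 1 / 2)
    (hw1 : ∑ i, w i = 1) (a : ℝ) :
    StrictMonoOn (fun γ : ℝ => ∑ i, w i * γ ^ 2 / ((x i - a) ^ 2 + γ ^ 2))
        (Set.Ioi (0 : ℝ)) ∧
    (∃ c : ℝ, c < 1 / 2 ∧
      Tendsto (fun γ : ℝ => ∑ i, w i * γ ^ 2 / ((x i - a) ^ 2 + γ ^ 2))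
        (nhdsWithin 0 (Set.Ioi 0)) (nhds c)) ∧
    Tendsto (fun γ : ℝ => ∑ i, w i * γ ^ 2 / ((x i - a) ^ 2 + γ ^ 2)) atTop
      (nhds 1) ∧
    (∃! γ' : ℝ, 0 < γ' ∧ (∑ i, w i * γ' ^ 2 / ((x i - a) ^ 2 + γ' ^ 2)) = 1 / 2) := by
  have hlim₀ : ∑ i with x i = a, w i < 1 / 2 :=
    sum_filter_eq_lt_of_injective hx.injective one_half_pos hwhalf
  obtain ⟨i₀, hxi₀⟩ := exists_ne_of_sum_filter_eq_lt_sum 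
    (hlim₀.trans (by rw [hw1]; norm_num))
  have hmono := strictMonoOn_scaleSum (fun i => (hw i).le) (hw i₀) hxi₀
  have h₀ := tendsto_scaleSum_nhdsGT_zero x w a
  have htop := hw1 ▸ tendsto_scaleSum_atTop x w a
  exact ⟨hmono, ⟨_, hlim₀, h₀⟩, htop, existsUnique_eq_of_strictMonoOn_Ioi
    (continuousOn_scaleSum x w a) hmono h₀ htop hlim₀ one_half_lt_one⟩

/-- `γ ↦ S₀(a,γ) = Σᵢ wᵢ γ²/((xᵢ-a)² + γ²)` is strictly increasing on `(0,∞)`,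
its limit as `γ → 0⁺` is some value `< 1/2`, its limit as `γ → ∞` is `1`,
and hence `S₀(a,γ̂) = 1/2` has a unique positive solution. -/
theorem scale_equation_unique_solution (n : ℕ) (hn : 3 ≤ n) (x : Fin n → ℝ)
    (hx : StrictMono x) (w : Fin n → ℝ) (hw : ∀ i, 0 < w i) (hwhalf : ∀ i, w i < 1 / 2)
    (hw1 : ∑ i, w i = 1) (a : ℝ) :
    StrictMonoOn (fun γ : ℝ => ∑ i, w i * γ ^ 2 / ((x i - a) ^ 2 + γ ^ 2))
        (Set.Ioi (0 : ℝ)) ∧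
    (∃ c : ℝ, c < 1 / 2 ∧
      Tendsto (fun γ : ℝ => ∑ i, w i * γ ^ 2 / ((x i - a) ^ 2 + γ ^ 2))
        (nhdsWithin 0 (Set.Ioi 0)) (nhds c)) ∧
    Tendsto (fun γ : ℝ => ∑ i, w i * γ ^ 2 / ((x i - a) ^ 2 + γ ^ 2)) atTop
      (nhds 1) ∧
    (∃! γ' : ℝ, 0 < γ' ∧ (∑ i, w i * γ' ^ 2 / ((x i - a) ^ 2 + γ' ^ 2)) = 1 / 2) :=
  scale_equation_unique_solution_general n x hx w hw hwhalf hw1 a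
end

section
/- Let x₁ < ... < xₙ, n ≥ 3, wᵢ ∈ (0,1/2), Σwᵢ = 1, and let (â, γ̂) with γ̂ > 0 be a critical point of L(a,γ) = Σᵢ wᵢ log((xᵢ-a)² + γ²) − log γ. Then ∂²L/∂a²(â,γ̂) > 0, i.e., −2Σᵢ wᵢ((xᵢ-â)² − γ̂²)/((xᵢ-â)² + γ̂²)² > 0. -/
open Finset Real

/-- At a critical point `(ahat,γ̂)` of the Cauchy negative log-likelihood `L`,
the second derivative in `a` is strictly positive:
`−2Σᵢ wᵢ((xᵢ-ahat)² − γ̂²)/((xᵢ-ahat)² + γ̂²)² > 0`. -/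
theorem second_derivative_a_pos (n : ℕ) (hn : 3 ≤ n) (x : Fin n → ℝ)
    (hx : StrictMono x) (w : Fin n → ℝ) (hw : ∀ i, 0 < w i) (hwhalf : ∀ i, w i < 1 / 2)
    (hw1 : ∑ i, w i = 1) (ahat γ' : ℝ) (hγ' : 0 < γ')
    (hcrit_a : (∑ i, w i * (x i - ahat) / ((x i - ahat) ^ 2 + γ' ^ 2)) = 0)
    (hcrit_γ : (∑ i, w i * γ' ^ 2 / ((x i - ahat) ^ 2 + γ' ^ 2)) = 1 / 2) :
    0 < -2 * ∑ i, w i * ((x i - ahat) ^ 2 - γ' ^ 2) / ((x i - ahat) ^ 2 + γ' ^ 2) ^ 2 := by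
  have hd : ∀ i : Fin n, 0 < (x i - ahat) ^ 2 + γ' ^ 2 := fun i => by positivity
  -- the first-power sum vanishes
  have hsum0 : ∑ i, w i * ((x i - ahat) ^ 2 - γ' ^ 2) / ((x i - ahat) ^ 2 + γ' ^ 2) = 0 := by
    have h1 : ∀ i ∈ Finset.univ, w i * ((x i - ahat) ^ 2 - γ' ^ 2) / ((x i - ahat) ^ 2 + γ' ^ 2)
        = w i - 2 * (w i * γ' ^ 2 / ((x i - ahat) ^ 2 + γ' ^ 2)) := by
      intro i _
      have := (hd i).ne'
      field_simp
      ring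
    rw [Finset.sum_congr rfl h1, Finset.sum_sub_distrib, hw1, ← Finset.mul_sum, hcrit_γ]
    norm_num
  -- some index has (x i - ahat)^2 ≠ γ'^2
  have hex : ∃ i : Fin n, (x i - ahat) ^ 2 ≠ γ' ^ 2 := by
    by_contra h
    push_neg at h
    set i0 : Fin n := ⟨0, by omega⟩
    set i1 : Fin n := ⟨1, by omega⟩
    set i2 : Fin n := ⟨2, by omega⟩
    have h01 : x i0 < x i1 := hx (by simp [i0, i1])
    have h12 : x i1 < x i2 := hx (by simp [i1, i2])
    have e0 : (x i0 - ahat - γ') * (x i0 - ahat + γ') = 0 := by nlinarith [h i0]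
    have e1 : (x i1 - ahat - γ') * (x i1 - ahat + γ') = 0 := by nlinarith [h i1]
    have e2 : (x i2 - ahat - γ') * (x i2 - ahat + γ') = 0 := by nlinarith [h i2]
    rcases mul_eq_zero.mp e0 with h0 | h0 <;> rcases mul_eq_zero.mp e1 with h1' | h1' <;>
      rcases mul_eq_zero.mp e2 with h2' | h2' <;> linarith
  obtain ⟨j, hj⟩ := hex
  -- termwise splitting inequality, strict at j
  have hle : ∀ i ∈ Finset.univ,
      w i * ((x i - ahat) ^ 2 - γ' ^ 2) / ((x i - ahat) ^ 2 + γ' ^ 2) ^ 2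
        ≤ (1 / (2 * γ' ^ 2)) * (w i * ((x i - ahat) ^ 2 - γ' ^ 2) / ((x i - ahat) ^ 2 + γ' ^ 2)) := by
    intro i _
    have hdi := hd i
    have key : (1 / (2 * γ' ^ 2)) * (w i * ((x i - ahat) ^ 2 - γ' ^ 2) / ((x i - ahat) ^ 2 + γ' ^ 2))
        - w i * ((x i - ahat) ^ 2 - γ' ^ 2) / ((x i - ahat) ^ 2 + γ' ^ 2) ^ 2
        = w i * ((x i - ahat) ^ 2 - γ' ^ 2) ^ 2
            / (2 * γ' ^ 2 * ((x i - ahat) ^ 2 + γ' ^ 2) ^ 2) := by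
      field_simp
      ring
    have hnn : (0:ℝ) ≤ w i * ((x i - ahat) ^ 2 - γ' ^ 2) ^ 2
        / (2 * γ' ^ 2 * ((x i - ahat) ^ 2 + γ' ^ 2) ^ 2) :=
      div_nonneg (mul_nonneg (hw i).le (sq_nonneg _)) (by positivity)
    linarith
  have hlt : w j * ((x j - ahat) ^ 2 - γ' ^ 2) / ((x j - ahat) ^ 2 + γ' ^ 2) ^ 2
      < (1 / (2 * γ' ^ 2)) * (w j * ((x j - ahat) ^ 2 - γ' ^ 2) / ((x j - ahat) ^ 2 + γ' ^ 2)) := by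
    have hdj := hd j
    have key : (1 / (2 * γ' ^ 2)) * (w j * ((x j - ahat) ^ 2 - γ' ^ 2) / ((x j - ahat) ^ 2 + γ' ^ 2))
        - w j * ((x j - ahat) ^ 2 - γ' ^ 2) / ((x j - ahat) ^ 2 + γ' ^ 2) ^ 2
        = w j * ((x j - ahat) ^ 2 - γ' ^ 2) ^ 2
            / (2 * γ' ^ 2 * ((x j - ahat) ^ 2 + γ' ^ 2) ^ 2) := by
      field_simp
      ring
    have hpos : 0 < w j * ((x j - ahat) ^ 2 - γ' ^ 2) ^ 2
        / (2 * γ' ^ 2 * ((x j - ahat) ^ 2 + γ' ^ 2) ^ 2) := by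
      have hne : (x j - ahat) ^ 2 - γ' ^ 2 ≠ 0 := sub_ne_zero.mpr hj
      have h2 : 0 < ((x j - ahat) ^ 2 - γ' ^ 2) ^ 2 :=
        lt_of_le_of_ne (sq_nonneg _) (Ne.symm (pow_ne_zero 2 hne))
      exact div_pos (mul_pos (hw j) h2) (by positivity)
    linarith
  have hS : ∑ i, w i * ((x i - ahat) ^ 2 - γ' ^ 2) / ((x i - ahat) ^ 2 + γ' ^ 2) ^ 2
      < ∑ i, (1 / (2 * γ' ^ 2)) * (w i * ((x i - ahat) ^ 2 - γ' ^ 2) / ((x i - ahat) ^ 2 + γ' ^ 2)) :=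
    Finset.sum_lt_sum hle ⟨j, Finset.mem_univ j, hlt⟩
  rw [← Finset.mul_sum, hsum0, mul_zero] at hS
  linarith
end

section
/- Let x₁ < ... < xₙ, n ≥ 3, wᵢ ∈ (0,1/2), Σwᵢ = 1. At any critical point (â,γ̂) of L(a,γ) = Σᵢ wᵢ log((xᵢ-a)² + γ²) − log γ with γ̂ > 0, the Hessian determinant of L is strictly positive; consequently every critical point is a strict local minimizer. -/
/-!
Write `aᵢ = xᵢ - â`, `ρᵢ = aᵢ² + γ̂²`, `pᵢ = aᵢ² - γ̂²` and `uᵢ = wᵢ / ρᵢ²`. As `aᵢ² = ρᵢ - γ̂²`,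
the Hessian entries and the sums `∑ uᵢ pᵢ²`, `∑ uᵢ aᵢ²`, `∑ uᵢ pᵢ aᵢ` are all linear in the
moments `∑ wᵢ / ρᵢ`, `∑ wᵢ / ρᵢ²`, `∑ wᵢ aᵢ / ρᵢ`, `∑ wᵢ aᵢ / ρᵢ²`, and at a critical point
`∑ wᵢ aᵢ / ρᵢ = 0` and `γ̂² ∑ wᵢ / ρᵢ = 1/2`. This yields
`γ̂² det = 4 (∑ uᵢ pᵢ² · ∑ uᵢ aᵢ² - (∑ uᵢ pᵢ aᵢ)²)`, which is positive by the strict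
Cauchy–Schwarz inequality: `pᵢ aⱼ - pⱼ aᵢ = (aᵢ - aⱼ)(aᵢ aⱼ + γ̂²)`, and three distinct `aᵢ`
cannot pairwise satisfy `aᵢ aⱼ = -γ̂²`. The trace of the Hessian is `1/γ̂² > 0`, so the Hessian
is positive definite, and the second derivative test (the mean value theorem along segments)
gives a strict local minimum.
-/

open Finset Real

/-- The weighted negative log-likelihood of the Cauchy distribution. -/
noncomputable def cauchyNLL (n : ℕ) (x w : Fin n → ℝ) (a γ : ℝ) : ℝ :=
  (∑ i, w i * Real.log ((x i - a) ^ 2 + γ ^ 2)) - Real.log γ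

open Filter Topology
open ContinuousLinearMap (fst snd)

theorem Finset.sq_sum_mul_mul_lt_sum_mul_sq_mul_sum_mul_sq {ι R : Type*} [CommRing R]
    [LinearOrder R] [IsStrictOrderedRing R] {s : Finset ι} {u f g : ι → R}
    (hu : ∀ i ∈ s, 0 ≤ u i) {i j : ι} (hi : i ∈ s) (hj : j ∈ s)
    (hui : 0 < u i) (huj : 0 < u j) (hfg : f i * g j ≠ f j * g i) :
    (∑ k ∈ s, u k * (f k * g k)) ^ 2 < (∑ k ∈ s, u k * f k ^ 2) * ∑ k ∈ s, u k * g k ^ 2 := by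
  have lagrange : 2 * ((∑ k ∈ s, u k * f k ^ 2) * (∑ k ∈ s, u k * g k ^ 2)
      - (∑ k ∈ s, u k * (f k * g k)) ^ 2)
      = ∑ k ∈ s, ∑ l ∈ s, u k * u l * (f k * g l - f l * g k) ^ 2 := by
    have expand : ∀ k l, u k * u l * (f k * g l - f l * g k) ^ 2
        = u k * f k ^ 2 * (u l * g l ^ 2) + u l * f l ^ 2 * (u k * g k ^ 2)
          - 2 * (u k * (f k * g k) * (u l * (f l * g l))) := fun k l => by ring
    simp only [expand, sum_sub_distrib, sum_add_distrib, ← sum_mul, ← mul_sum]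
    ring
  have hnonneg : ∀ k ∈ s, ∀ l ∈ s, 0 ≤ u k * u l * (f k * g l - f l * g k) ^ 2 :=
    fun k hk l hl => by have := hu k hk; have := hu l hl; positivity
  have hpos : 0 < ∑ k ∈ s, ∑ l ∈ s, u k * u l * (f k * g l - f l * g k) ^ 2 :=
    sum_pos' (fun k hk => sum_nonneg (hnonneg k hk)) ⟨i, hi, sum_pos' (hnonneg i hi)
      ⟨j, hj, mul_pos (mul_pos hui huj) (by have := sub_ne_zero.2 hfg; positivity)⟩⟩
  linarith

theorem exists_sq_sub_mul_ne {ι : Type*} {a : ι → ℝ} (ha : Function.Injective a)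
    {i₀ i₁ i₂ : ι} (h₀₁ : i₀ ≠ i₁) (h₁₂ : i₁ ≠ i₂) (h₀₂ : i₀ ≠ i₂) {γ : ℝ} (hγ : γ ≠ 0) :
    ∃ i j, (a i ^ 2 - γ ^ 2) * a j ≠ (a j ^ 2 - γ ^ 2) * a i := by
  by_contra! h
  have hprod : ∀ {i j}, i ≠ j → a i * a j = -γ ^ 2 := fun {i j} hij => by
    have : (a i - a j) * (a i * a j + γ ^ 2) = 0 := by linear_combination h i j
    rcases mul_eq_zero.1 this with h' | h'
    · exact absurd (ha (sub_eq_zero.1 h')) hij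
    · linarith
  have h₁ : a i₁ = 0 := by
    have : a i₁ * (a i₀ - a i₂) = 0 := by linear_combination hprod h₀₁.symm - hprod h₁₂
    exact (mul_eq_zero.1 this).resolve_right (sub_ne_zero.2 (ha.ne h₀₂))
  have := hprod h₀₁
  rw [h₁, mul_zero] at this
  exact hγ (pow_eq_zero_iff two_ne_zero |>.1 (neg_eq_zero.1 this.symm))

theorem eventually_lt_of_hasFDerivAt_of_coercive {E : Type*} [NormedAddCommGroup E]
    [NormedSpace ℝ E] {f : E → ℝ} {f' : E → E →L[ℝ] ℝ} {H : E →L[ℝ] E →L[ℝ] ℝ} {p : E} {c : ℝ}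
    (hf : ∀ᶠ y in 𝓝 p, HasFDerivAt f (f' y) y) (hp : f' p = 0) (hH : HasFDerivAt f' H p)
    (hc : 0 < c) (hHc : ∀ v, c * ‖v‖ ^ 2 ≤ H v v) :
    ∀ᶠ y in 𝓝[≠] p, f p < f y := by
  have hsmall : ∀ᶠ y in 𝓝 p, ‖f' y - H (y - p)‖ ≤ c / 2 * ‖y - p‖ := by
    simpa [hp] using hH.isLittleO.bound (half_pos hc)
  obtain ⟨δ, hδ, hball⟩ := Metric.eventually_nhds_iff_ball.1 (hf.and hsmall)
  have hpos : ∀ u, p + u ∈ Metric.ball p δ → u ≠ 0 → 0 < f' (p + u) u := by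
    intro u hu hu0
    have hnear : ‖f' (p + u) - H u‖ ≤ c / 2 * ‖u‖ := by simpa using (hball _ hu).2
    have herr : |(f' (p + u) - H u) u| ≤ c / 2 * ‖u‖ * ‖u‖ :=
      ((f' (p + u) - H u).le_opNorm u).trans (by gcongr)
    rw [sub_apply] at herr
    nlinarith [abs_le.1 herr, hHc u, mul_pos hc (pow_pos (norm_pos_iff.2 hu0) 2)]
  rw [eventually_nhdsWithin_iff]
  filter_upwards [Metric.ball_mem_nhds p hδ] with y hy hyp
  set v := y - p
  have hseg : ∀ t ∈ Set.Icc (0 : ℝ) 1, p + t • v ∈ Metric.ball p δ := fun t ht =>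
    (convex_ball p δ).add_smul_sub_mem (Metric.mem_ball_self hδ) hy ht
  have hderiv : ∀ t ∈ Set.Icc (0 : ℝ) 1,
      HasDerivAt (fun t : ℝ => f (p + t • v)) (f' (p + t • v) v) t := by
    intro t ht
    have hline : HasDerivAt (fun s : ℝ => p + s • v) v t := by
      simpa using ((hasDerivAt_id t).smul_const v).const_add p
    exact (hball _ (hseg t ht)).1.comp_hasDerivAt t hline
  obtain ⟨t, ht, hslope⟩ := exists_hasDerivAt_eq_slope (fun t : ℝ => f (p + t • v)) _
    zero_lt_one (fun t ht => (hderiv t ht).continuousAt.continuousWithinAt)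
    (fun t ht => hderiv t (Set.Ioo_subset_Icc_self ht))
  have hv0 : v ≠ 0 := sub_ne_zero.2 hyp
  have hslope_pos :=
    hpos (t • v) (hseg t (Set.Ioo_subset_Icc_self ht)) (smul_ne_zero ht.1.ne' hv0)
  rw [map_smul, smul_eq_mul] at hslope_pos
  replace hslope_pos := pos_of_mul_pos_right hslope_pos ht.1.le
  simp only [one_smul, zero_smul, add_zero, v, add_sub_cancel] at hslope
  linarith

/-- `symmBilin₂ A B C v v' = vᵀ [[A, B], [B, C]] v'`. -/
noncomputable def symmBilin₂ (A B C : ℝ) : ℝ × ℝ →L[ℝ] ℝ × ℝ →L[ℝ] ℝ :=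
  (A • fst ℝ ℝ ℝ + B • snd ℝ ℝ ℝ).smulRight (fst ℝ ℝ ℝ)
    + (B • fst ℝ ℝ ℝ + C • snd ℝ ℝ ℝ).smulRight (snd ℝ ℝ ℝ)

theorem exists_pos_mul_norm_sq_le_symmBilin₂ {A B C : ℝ} (htr : 0 < A + C)
    (hdet : 0 < A * C - B ^ 2) : ∃ c > 0, ∀ v, c * ‖v‖ ^ 2 ≤ symmBilin₂ A B C v v := by
  set c := (A * C - B ^ 2) / (A + C)
  have hcAC : c * (A + C) = A * C - B ^ 2 := div_mul_cancel₀ _ htr.ne'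
  have hAc : 0 < A - c := by
    have : (A - c) * (A + C) = A ^ 2 + B ^ 2 := by linear_combination -hcAC
    have hA : A ≠ 0 := by rintro rfl; nlinarith [sq_nonneg B]
    exact pos_of_mul_pos_left (this ▸ by positivity) htr.le
  have hc : 0 < c := div_pos hdet htr
  refine ⟨c, hc, fun v => ?_⟩
  have hnorm : ‖v‖ ^ 2 ≤ v.1 ^ 2 + v.2 ^ 2 := by
    rw [Prod.norm_def, Real.norm_eq_abs, Real.norm_eq_abs]
    rcases max_cases |v.1| |v.2| with ⟨h, -⟩ | ⟨h, -⟩ <;> rw [h, sq_abs] <;>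
      nlinarith [sq_nonneg v.1, sq_nonneg v.2]
  have key : (A - c) * (symmBilin₂ A B C v v - c * (v.1 ^ 2 + v.2 ^ 2))
      = ((A - c) * v.1 + B * v.2) ^ 2 + c ^ 2 * v.2 ^ 2 := by
    simp [symmBilin₂]
    linear_combination (-v.2 ^ 2) * hcAC
  have hQ : 0 ≤ symmBilin₂ A B C v v - c * (v.1 ^ 2 + v.2 ^ 2) :=
    (mul_nonneg_iff_of_pos_left hAc).1 (key ▸ by positivity)
  nlinarith [mul_le_mul_of_nonneg_left hnorm hc.le]

theorem HasFDerivAt.div {𝕜 E : Type*} [NontriviallyNormedField 𝕜] [NormedAddCommGroup E]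
    [NormedSpace 𝕜 E] {N D : E → 𝕜} {N' D' : E →L[𝕜] 𝕜} {x : E} (hN : HasFDerivAt N N' x)
    (hD : HasFDerivAt D D' x) (hx : D x ≠ 0) :
    HasFDerivAt (fun y => N y / D y) ((D x ^ 2)⁻¹ • (D x • N' - N x • D')) x := by
  simp only [div_eq_mul_inv]
  refine (hN.fun_mul ((hasDerivAt_inv hx).comp_hasFDerivAt x hD)).congr_fderiv ?_
  ext v
  simp
  field_simp
  ring

section PlaneDerivatives

variable (c : ℝ) {q : ℝ × ℝ}

theorem hasFDerivAt_sub_fst_sq_add_snd_sq :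
    HasFDerivAt (fun q : ℝ × ℝ => (c - q.1) ^ 2 + q.2 ^ 2)
      ((2 * (q.1 - c)) • fst ℝ ℝ ℝ + (2 * q.2) • snd ℝ ℝ ℝ) q := by
  refine ((((hasFDerivAt_fst.const_sub c).pow 2).add (hasFDerivAt_snd.pow 2))).congr_fderiv ?_
  ext <;> simp [mul_sub]

theorem hasFDerivAt_log_sub_fst_sq_add_snd_sq (hq : q.2 ≠ 0) :
    HasFDerivAt (fun q : ℝ × ℝ => log ((c - q.1) ^ 2 + q.2 ^ 2))
      ((2 * (q.1 - c) / ((c - q.1) ^ 2 + q.2 ^ 2)) • fst ℝ ℝ ℝ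
        + (2 * q.2 / ((c - q.1) ^ 2 + q.2 ^ 2)) • snd ℝ ℝ ℝ) q := by
  refine ((hasFDerivAt_sub_fst_sq_add_snd_sq c).log (by positivity)).congr_fderiv ?_
  ext <;> simp <;> ring

theorem hasFDerivAt_fst_sub_div_sq_add_sq (hq : q.2 ≠ 0) :
    HasFDerivAt (fun q : ℝ × ℝ => 2 * (q.1 - c) / ((c - q.1) ^ 2 + q.2 ^ 2))
      ((-2 * (((c - q.1) ^ 2 - q.2 ^ 2) / ((c - q.1) ^ 2 + q.2 ^ 2) ^ 2)) • fst ℝ ℝ ℝ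
        + (4 * (q.2 * (c - q.1) / ((c - q.1) ^ 2 + q.2 ^ 2) ^ 2)) • snd ℝ ℝ ℝ) q := by
  have hρ : (c - q.1) ^ 2 + q.2 ^ 2 ≠ 0 := by positivity
  refine ((((hasFDerivAt_fst.sub_const c).const_mul 2)).div
    (hasFDerivAt_sub_fst_sq_add_snd_sq c) hρ).congr_fderiv ?_
  ext <;> simp <;> field_simp <;> ring

theorem hasFDerivAt_snd_div_sq_add_sq (hq : q.2 ≠ 0) :
    HasFDerivAt (fun q : ℝ × ℝ => 2 * q.2 / ((c - q.1) ^ 2 + q.2 ^ 2))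
      ((4 * (q.2 * (c - q.1) / ((c - q.1) ^ 2 + q.2 ^ 2) ^ 2)) • fst ℝ ℝ ℝ
        + (2 * (((c - q.1) ^ 2 - q.2 ^ 2) / ((c - q.1) ^ 2 + q.2 ^ 2) ^ 2)) • snd ℝ ℝ ℝ) q := by
  have hρ : (c - q.1) ^ 2 + q.2 ^ 2 ≠ 0 := by positivity
  refine ((hasFDerivAt_snd.const_mul 2).div
    (hasFDerivAt_sub_fst_sq_add_snd_sq c) hρ).congr_fderiv ?_
  ext <;> simp <;> field_simp <;> ring

end PlaneDerivatives

section CauchyNLL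

variable {n : ℕ} (x w : Fin n → ℝ)

noncomputable def cauchyGrad (q : ℝ × ℝ) : ℝ × ℝ →L[ℝ] ℝ :=
  (∑ i, w i * (2 * (q.1 - x i) / ((x i - q.1) ^ 2 + q.2 ^ 2))) • fst ℝ ℝ ℝ
    + ((∑ i, w i * (2 * q.2 / ((x i - q.1) ^ 2 + q.2 ^ 2))) - q.2⁻¹) • snd ℝ ℝ ℝ

noncomputable def cauchyHessAA (a γ : ℝ) : ℝ :=
  -2 * ∑ i, w i * ((x i - a) ^ 2 - γ ^ 2) / ((x i - a) ^ 2 + γ ^ 2) ^ 2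

noncomputable def cauchyHessAG (a γ : ℝ) : ℝ :=
  4 * ∑ i, w i * (γ * (x i - a)) / ((x i - a) ^ 2 + γ ^ 2) ^ 2

noncomputable def cauchyHessGG (a γ : ℝ) : ℝ :=
  2 * (∑ i, w i * ((x i - a) ^ 2 - γ ^ 2) / ((x i - a) ^ 2 + γ ^ 2) ^ 2) + 1 / γ ^ 2

theorem hasFDerivAt_cauchyNLL {q : ℝ × ℝ} (hq : 0 < q.2) :
    HasFDerivAt (fun q : ℝ × ℝ => cauchyNLL n x w q.1 q.2) (cauchyGrad x w q) q := by
  have hsum := HasFDerivAt.fun_sum fun i (_ : i ∈ univ) =>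
    (hasFDerivAt_log_sub_fst_sq_add_snd_sq (x i) hq.ne').const_mul (w i)
  have hlog : HasFDerivAt (fun q : ℝ × ℝ => log q.2) (q.2⁻¹ • snd ℝ ℝ ℝ) q := by
    simpa using hasFDerivAt_snd.log hq.ne'
  refine (hsum.sub hlog).congr_fderiv ?_
  ext <;> simp [cauchyGrad, mul_div_assoc]

theorem cauchyGrad_eq_zero {a γ : ℝ} (hγ : 0 < γ)
    (hcrit_a : ∑ i, w i * (x i - a) / ((x i - a) ^ 2 + γ ^ 2) = 0)
    (hcrit_γ : ∑ i, w i * γ ^ 2 / ((x i - a) ^ 2 + γ ^ 2) = 1 / 2) :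
    cauchyGrad x w (a, γ) = 0 := by
  have ha : ∑ i, w i * (2 * (a - x i) / ((x i - a) ^ 2 + γ ^ 2)) = 0 := calc
    _ = -2 * ∑ i, w i * (x i - a) / ((x i - a) ^ 2 + γ ^ 2) := by
      rw [mul_sum]; exact sum_congr rfl fun i _ => by ring
    _ = 0 := by rw [hcrit_a, mul_zero]
  have hγ' : ∑ i, w i * (2 * γ / ((x i - a) ^ 2 + γ ^ 2)) = γ⁻¹ := calc
    _ = 2 / γ * ∑ i, w i * γ ^ 2 / ((x i - a) ^ 2 + γ ^ 2) := by
      rw [mul_sum]; exact sum_congr rfl fun i _ => by field_simp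
    _ = γ⁻¹ := by rw [hcrit_γ]; ring
  simp [cauchyGrad, ha, hγ']

theorem hasFDerivAt_cauchyGrad {a γ : ℝ} (hγ : γ ≠ 0) :
    HasFDerivAt (cauchyGrad x w)
      (symmBilin₂ (cauchyHessAA x w a γ) (cauchyHessAG x w a γ) (cauchyHessGG x w a γ)) (a, γ) := by
  have hA := HasFDerivAt.fun_sum fun i (_ : i ∈ univ) =>
    (hasFDerivAt_fst_sub_div_sq_add_sq (x i) (q := (a, γ)) hγ).const_mul (w i)
  have hG := HasFDerivAt.fun_sum fun i (_ : i ∈ univ) =>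
    (hasFDerivAt_snd_div_sq_add_sq (x i) (q := (a, γ)) hγ).const_mul (w i)
  have hinv : HasFDerivAt (fun q : ℝ × ℝ => q.2⁻¹) (-(γ ^ 2)⁻¹ • snd ℝ ℝ ℝ) (a, γ) :=
    (hasDerivAt_inv hγ).comp_hasFDerivAt (a, γ) hasFDerivAt_snd
  refine ((hA.smul_const (fst ℝ ℝ ℝ)).add ((hG.sub hinv).smul_const (snd ℝ ℝ ℝ))).congr_fderiv ?_
  ext <;> simp [symmBilin₂, cauchyHessAA, cauchyHessAG, cauchyHessGG, mul_sum, mul_div_assoc,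
    mul_left_comm]

theorem sq_mul_cauchyHessDet_eq {a γ : ℝ} (hγ : γ ≠ 0) (hw1 : ∑ i, w i = 1)
    (hcrit_a : ∑ i, w i * (x i - a) / ((x i - a) ^ 2 + γ ^ 2) = 0)
    (hcrit_γ : ∑ i, w i * γ ^ 2 / ((x i - a) ^ 2 + γ ^ 2) = 1 / 2) :
    γ ^ 2 * (cauchyHessAA x w a γ * cauchyHessGG x w a γ - cauchyHessAG x w a γ ^ 2) =
      4 * ((∑ i, w i / ((x i - a) ^ 2 + γ ^ 2) ^ 2 * ((x i - a) ^ 2 - γ ^ 2) ^ 2) *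
        (∑ i, w i / ((x i - a) ^ 2 + γ ^ 2) ^ 2 * (x i - a) ^ 2) -
        (∑ i, w i / ((x i - a) ^ 2 + γ ^ 2) ^ 2 * (((x i - a) ^ 2 - γ ^ 2) * (x i - a))) ^ 2) := by
  have hρ : ∀ i, (x i - a) ^ 2 + γ ^ 2 ≠ 0 := fun i => by positivity
  set R₁ := ∑ i, w i / ((x i - a) ^ 2 + γ ^ 2)
  set R₂ := ∑ i, w i / ((x i - a) ^ 2 + γ ^ 2) ^ 2
  set E := ∑ i, w i * (x i - a) / ((x i - a) ^ 2 + γ ^ 2) ^ 2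
  have hR₁ : γ ^ 2 * R₁ = 1 / 2 := by
    rw [← hcrit_γ, mul_sum]; exact sum_congr rfl fun i _ => by ring
  have hS : ∑ i, w i * ((x i - a) ^ 2 - γ ^ 2) / ((x i - a) ^ 2 + γ ^ 2) ^ 2
      = R₁ - 2 * γ ^ 2 * R₂ := by
    simp only [R₁, R₂, mul_sum, ← sum_sub_distrib]
    exact sum_congr rfl fun i _ => by field_simp [hρ i]; ring
  have hT : ∑ i, w i * (γ * (x i - a)) / ((x i - a) ^ 2 + γ ^ 2) ^ 2 = γ * E := by
    simp only [E, mul_sum]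
    exact sum_congr rfl fun i _ => by ring
  have hA : ∑ i, w i / ((x i - a) ^ 2 + γ ^ 2) ^ 2 * ((x i - a) ^ 2 - γ ^ 2) ^ 2
      = 1 - 4 * γ ^ 2 * R₁ + 4 * γ ^ 4 * R₂ := by
    simp only [← hw1, R₁, R₂, mul_sum, ← sum_sub_distrib, ← sum_add_distrib]
    exact sum_congr rfl fun i _ => by field_simp [hρ i]; ring
  have hB : ∑ i, w i / ((x i - a) ^ 2 + γ ^ 2) ^ 2 * (x i - a) ^ 2 = R₁ - γ ^ 2 * R₂ := by
    simp only [R₁, R₂, mul_sum, ← sum_sub_distrib]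
    exact sum_congr rfl fun i _ => by field_simp [hρ i]; ring
  have hC : ∑ i, w i / ((x i - a) ^ 2 + γ ^ 2) ^ 2 * (((x i - a) ^ 2 - γ ^ 2) * (x i - a))
      = -2 * γ ^ 2 * E := by
    rw [← add_zero (-2 * γ ^ 2 * E), ← hcrit_a]
    simp only [E, mul_sum, ← sum_add_distrib]
    exact sum_congr rfl fun i _ => by field_simp [hρ i]; ring
  simp only [cauchyHessAA, cauchyHessAG, cauchyHessGG, hS, hT, hA, hB, hC]
  have hγinv : γ ^ 2 * (1 / γ ^ 2) = 1 := by field_simp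
  linear_combination (-2 * (R₁ - 2 * γ ^ 2 * R₂)) * hγinv + (12 * R₁ - 16 * γ ^ 2 * R₂) * hR₁

theorem cauchyHessDet_pos (hn : 3 ≤ n) (hx : Function.Injective x) (hw : ∀ i, 0 < w i)
    (hw1 : ∑ i, w i = 1) {a γ : ℝ} (hγ : 0 < γ)
    (hcrit_a : ∑ i, w i * (x i - a) / ((x i - a) ^ 2 + γ ^ 2) = 0)
    (hcrit_γ : ∑ i, w i * γ ^ 2 / ((x i - a) ^ 2 + γ ^ 2) = 1 / 2) :
    0 < cauchyHessAA x w a γ * cauchyHessGG x w a γ - cauchyHessAG x w a γ ^ 2 := by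
  obtain ⟨i, j, hij⟩ := exists_sq_sub_mul_ne (a := fun i => x i - a) (sub_left_injective.comp hx)
    (i₀ := ⟨0, by omega⟩) (i₁ := ⟨1, by omega⟩) (i₂ := ⟨2, by omega⟩)
    (by simp) (by simp) (by simp) hγ.ne'
  have hu : ∀ i, 0 < w i / ((x i - a) ^ 2 + γ ^ 2) ^ 2 := fun i => by
    have := hw i; positivity
  have hCS := sq_sum_mul_mul_lt_sum_mul_sq_mul_sum_mul_sq (s := univ)
    (f := fun i => (x i - a) ^ 2 - γ ^ 2) (g := fun i => x i - a)
    (fun i _ => (hu i).le) (mem_univ i) (mem_univ j) (hu i) (hu j) hij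
  refine pos_of_mul_pos_right ?_ (sq_nonneg γ)
  rw [sq_mul_cauchyHessDet_eq x w hγ.ne' hw1 hcrit_a hcrit_γ]
  linarith

end CauchyNLL

theorem hessian_det_pos_at_critical_point_general (n : ℕ) (hn : 3 ≤ n) (x : Fin n → ℝ)
    (hx : StrictMono x) (w : Fin n → ℝ) (hw : ∀ i, 0 < w i)
    (hw1 : ∑ i, w i = 1) (ahat γ' : ℝ) (hγ' : 0 < γ')
    (hcrit_a : (∑ i, w i * (x i - ahat) / ((x i - ahat) ^ 2 + γ' ^ 2)) = 0)
    (hcrit_γ : (∑ i, w i * γ' ^ 2 / ((x i - ahat) ^ 2 + γ' ^ 2)) = 1 / 2) :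
    0 < (-2 * ∑ i, w i * ((x i - ahat) ^ 2 - γ' ^ 2) / ((x i - ahat) ^ 2 + γ' ^ 2) ^ 2) *
          (2 * (∑ i, w i * ((x i - ahat) ^ 2 - γ' ^ 2) / ((x i - ahat) ^ 2 + γ' ^ 2) ^ 2)
            + 1 / γ' ^ 2) -
        (4 * ∑ i, w i * (γ' * (x i - ahat)) / ((x i - ahat) ^ 2 + γ' ^ 2) ^ 2) ^ 2 ∧
    ∃ ε > 0, ∀ a γ : ℝ, dist (a, γ) (ahat, γ') < ε → (a, γ) ≠ (ahat, γ') →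
      cauchyNLL n x w ahat γ' < cauchyNLL n x w a γ := by
  have hdet := cauchyHessDet_pos x w hn hx.injective hw hw1 hγ' hcrit_a hcrit_γ
  refine ⟨hdet, ?_⟩
  have htr : 0 < cauchyHessAA x w ahat γ' + cauchyHessGG x w ahat γ' := by
    rw [show cauchyHessAA x w ahat γ' + cauchyHessGG x w ahat γ' = 1 / γ' ^ 2 by
      simp only [cauchyHessAA, cauchyHessGG]; ring]
    positivity
  obtain ⟨c, hc, hcoer⟩ := exists_pos_mul_norm_sq_le_symmBilin₂ htr hdet
  have hderiv : ∀ᶠ q in 𝓝 (ahat, γ'), HasFDerivAt (fun q : ℝ × ℝ => cauchyNLL n x w q.1 q.2)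
      (cauchyGrad x w q) q :=
    (continuous_snd.tendsto _).eventually_const_lt hγ' |>.mono fun q hq =>
      hasFDerivAt_cauchyNLL x w hq
  have hmin := eventually_lt_of_hasFDerivAt_of_coercive hderiv
    (cauchyGrad_eq_zero x w hγ' hcrit_a hcrit_γ) (hasFDerivAt_cauchyGrad x w hγ'.ne') hc hcoer
  obtain ⟨ε, hε, hball⟩ := Metric.eventually_nhds_iff.1 (eventually_nhdsWithin_iff.1 hmin)
  exact ⟨ε, hε, fun a γ hdist hne => hball (y := (a, γ)) hdist hne⟩

/-- At any critical point `(ahat,γ̂)` with `γ̂ > 0` of the Cauchy negative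
log-likelihood, the Hessian determinant is strictly positive, and the critical
point is a strict local minimizer. -/
theorem hessian_det_pos_at_critical_point (n : ℕ) (hn : 3 ≤ n) (x : Fin n → ℝ)
    (hx : StrictMono x) (w : Fin n → ℝ) (hw : ∀ i, 0 < w i) (hwhalf : ∀ i, w i < 1 / 2)
    (hw1 : ∑ i, w i = 1) (ahat γ' : ℝ) (hγ' : 0 < γ')
    (hcrit_a : (∑ i, w i * (x i - ahat) / ((x i - ahat) ^ 2 + γ' ^ 2)) = 0)
    (hcrit_γ : (∑ i, w i * γ' ^ 2 / ((x i - ahat) ^ 2 + γ' ^ 2)) = 1 / 2) :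
    0 < (-2 * ∑ i, w i * ((x i - ahat) ^ 2 - γ' ^ 2) / ((x i - ahat) ^ 2 + γ' ^ 2) ^ 2) *
          (2 * (∑ i, w i * ((x i - ahat) ^ 2 - γ' ^ 2) / ((x i - ahat) ^ 2 + γ' ^ 2) ^ 2)
            + 1 / γ' ^ 2) -
        (4 * ∑ i, w i * (γ' * (x i - ahat)) / ((x i - ahat) ^ 2 + γ' ^ 2) ^ 2) ^ 2 ∧
    ∃ ε > 0, ∀ a γ : ℝ, dist (a, γ) (ahat, γ') < ε → (a, γ) ≠ (ahat, γ') →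
      cauchyNLL n x w ahat γ' < cauchyNLL n x w a γ :=
  hessian_det_pos_at_critical_point_general n hn x hx w hw hw1 ahat γ' hγ' hcrit_a hcrit_γ
end

section
/- Let S₀ ∈ (0,1) and S₁ ∈ ℝ with S₀² + S₁² ≤ S₀ (which holds automatically when S₀ = Σwᵢ/(1+zᵢ²), S₁ = Σwᵢzᵢ/(1+zᵢ²) for weights wᵢ ≥ 0, Σwᵢ = 1). Then 2√(S₀(1−S₀)) − S₁²/√(S₀(1−S₀)) ≤ 1, with equality if and only if S₀ = 1/2 and S₁ = 0. -/
open Real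

/-- Key inequality in the descent proof of the generalized myriad filter:
if `S₀ ∈ (0,1)` and `S₀² + S₁² ≤ S₀`, then
`2√(S₀(1−S₀)) − S₁²/√(S₀(1−S₀)) ≤ 1`, with equality iff `S₀ = 1/2` and `S₁ = 0`. -/
theorem myriad_descent_key_inequality (S₀ S₁ : ℝ) (h₀ : 0 < S₀) (h₁ : S₀ < 1)
    (h : S₀ ^ 2 + S₁ ^ 2 ≤ S₀) :
    2 * Real.sqrt (S₀ * (1 - S₀)) - S₁ ^ 2 / Real.sqrt (S₀ * (1 - S₀)) ≤ 1 ∧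
    (2 * Real.sqrt (S₀ * (1 - S₀)) - S₁ ^ 2 / Real.sqrt (S₀ * (1 - S₀)) = 1 ↔
      S₀ = 1 / 2 ∧ S₁ = 0) := by
  set r := Real.sqrt (S₀ * (1 - S₀)) with hrdef
  have hprod : 0 < S₀ * (1 - S₀) := mul_pos h₀ (by linarith)
  have hr : 0 < r := Real.sqrt_pos.mpr hprod
  have hrsq : r ^ 2 = S₀ * (1 - S₀) := Real.sq_sqrt hprod.le
  have hrle : r ≤ 1 / 2 := by
    have h14 : Real.sqrt (S₀ * (1 - S₀)) ≤ Real.sqrt (1 / 4) :=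
      Real.sqrt_le_sqrt (by nlinarith [sq_nonneg (S₀ - 1/2)])
    have : Real.sqrt (1 / 4) = 1 / 2 := by
      rw [show (1 / 4 : ℝ) = (1 / 2) ^ 2 by norm_num, Real.sqrt_sq (by norm_num)]
    linarith [h14, this ▸ h14]
  have hdiv : 0 ≤ S₁ ^ 2 / r := div_nonneg (sq_nonneg _) hr.le
  constructor
  · linarith
  constructor
  · intro heq
    have heq' : 2 * r ^ 2 - S₁ ^ 2 = r := by
      field_simp at heq
      nlinarith [heq]
    have hS1 : S₁ = 0 := by nlinarith [sq_nonneg S₁]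
    have hr12 : r = 1 / 2 := by nlinarith
    have : S₀ * (1 - S₀) = 1 / 4 := by nlinarith
    have : S₀ = 1 / 2 := by nlinarith [sq_nonneg (S₀ - 1 / 2)]
    exact ⟨this, hS1⟩
  · rintro ⟨h1, h2⟩
    subst h1; subst h2
    have : r = 1 / 2 := by
      rw [hrdef, show (1 / 2 : ℝ) * (1 - 1 / 2) = (1 / 2) ^ 2 by norm_num,
        Real.sqrt_sq (by norm_num)]
    rw [this]; norm_num
end

section
/- Let x₁ < ... < xₙ, n ≥ 2, wᵢ > 0 with Σwᵢ = 1, γ > 0 fixed, and define S₀(a) = Σᵢ wᵢγ²/((xᵢ-a)²+γ²), S₁(a) = Σᵢ wᵢγ(xᵢ-a)/((xᵢ-a)²+γ²), Q(a) = Σᵢ wᵢ log((xᵢ-a)² + γ²). For the myriad filter update a' = a + γ·S₁(a)/S₀(a) it holds Q(a') ≤ Q(a), with equality if and only if S₁(a) = 0 (i.e., a' = a). -/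
open Finset Real

/-!
Writing `Dᵢ(b) = (xᵢ - b)² + γ²`, concavity of `log` gives
`Q(b) - Q(a) = Σᵢ wᵢ log (Dᵢ(b) / Dᵢ(a)) ≤ log (Σᵢ wᵢ Dᵢ(b) / Dᵢ(a))`.
For `b = a + γ t` the last sum is the quadratic `1 - 2 t S₁ + t² S₀`, whose minimum
`1 - S₁² / S₀` is attained exactly at the myriad step `t = S₁ / S₀`.
That minimum lies in `(0, 1]`, being a positive combination of positive ratios,
and equals `1` only when `S₁ = 0`.
-/

theorem sum_mul_log_le_log_sum_mul {ι : Type*} (s : Finset ι) (w p : ι → ℝ)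
    (hw : ∀ i ∈ s, 0 ≤ w i) (hw1 : ∑ i ∈ s, w i = 1) (hp : ∀ i ∈ s, 0 < p i) :
    ∑ i ∈ s, w i * log (p i) ≤ log (∑ i ∈ s, w i * p i) := by
  simpa using strictConcaveOn_log_Ioi.concaveOn.le_map_sum hw hw1 hp

namespace Myriad

variable {ι : Type*} [Fintype ι] (x w : ι → ℝ) (γ : ℝ)

noncomputable def S₀ (a : ℝ) : ℝ := ∑ i, w i * γ ^ 2 / ((x i - a) ^ 2 + γ ^ 2)

noncomputable def S₁ (a : ℝ) : ℝ := ∑ i, w i * (γ * (x i - a)) / ((x i - a) ^ 2 + γ ^ 2)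

noncomputable def Q (b : ℝ) : ℝ := ∑ i, w i * log ((x i - b) ^ 2 + γ ^ 2)

noncomputable def step (a : ℝ) : ℝ := a + γ * S₁ x w γ a / S₀ x w γ a

variable {w γ}

theorem univ_nonempty_of_sum_eq_one (hw1 : ∑ i, w i = 1) :
    (univ : Finset ι).Nonempty :=
  nonempty_of_sum_ne_zero (hw1 ▸ one_ne_zero)

theorem S₀_pos (hw : ∀ i, 0 < w i) (hw1 : ∑ i, w i = 1) (hγ : γ ≠ 0) (a : ℝ) :
    0 < S₀ x w γ a :=
  sum_pos (fun i _ => by have := hw i; positivity) (univ_nonempty_of_sum_eq_one hw1)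

theorem sum_mul_div_eq_quadratic (hγ : γ ≠ 0) (a t : ℝ) :
    ∑ i, w i * (((x i - (a + γ * t)) ^ 2 + γ ^ 2) / ((x i - a) ^ 2 + γ ^ 2))
      = ∑ i, w i - 2 * t * S₁ x w γ a + t ^ 2 * S₀ x w γ a := by
  rw [S₁, S₀, mul_sum, mul_sum, ← sum_sub_distrib, ← sum_add_distrib]
  refine sum_congr rfl fun i _ => ?_
  have : (x i - a) ^ 2 + γ ^ 2 ≠ 0 := by positivity
  field_simp
  ring

theorem sum_mul_div_step_eq {a : ℝ} (hw1 : ∑ i, w i = 1) (hγ : γ ≠ 0)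
    (hS₀ : S₀ x w γ a ≠ 0) :
    ∑ i, w i * (((x i - step x w γ a) ^ 2 + γ ^ 2) / ((x i - a) ^ 2 + γ ^ 2))
      = 1 - S₁ x w γ a ^ 2 / S₀ x w γ a := by
  rw [step, mul_div_assoc, sum_mul_div_eq_quadratic x hγ, hw1]
  field_simp
  ring

theorem Q_sub_Q_eq_sum_mul_log_div (hγ : γ ≠ 0) (a b : ℝ) :
    Q x w γ b - Q x w γ a
      = ∑ i, w i * log (((x i - b) ^ 2 + γ ^ 2) / ((x i - a) ^ 2 + γ ^ 2)) := by
  rw [Q, Q, ← sum_sub_distrib]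
  refine sum_congr rfl fun i _ => ?_
  rw [log_div (by positivity) (by positivity)]
  ring

theorem Q_step_sub_Q_le (hw : ∀ i, 0 < w i) (hw1 : ∑ i, w i = 1) (hγ : γ ≠ 0) (a : ℝ) :
    Q x w γ (step x w γ a) - Q x w γ a ≤ log (1 - S₁ x w γ a ^ 2 / S₀ x w γ a) := by
  rw [Q_sub_Q_eq_sum_mul_log_div x hγ,
    ← sum_mul_div_step_eq x hw1 hγ (S₀_pos x hw hw1 hγ a).ne']
  exact sum_mul_log_le_log_sum_mul _ _ _ (fun i _ => (hw i).le) hw1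
    fun i _ => by positivity

theorem one_sub_sq_S₁_div_S₀_pos (hw : ∀ i, 0 < w i) (hw1 : ∑ i, w i = 1) (hγ : γ ≠ 0)
    (a : ℝ) : 0 < 1 - S₁ x w γ a ^ 2 / S₀ x w γ a := by
  rw [← sum_mul_div_step_eq x hw1 hγ (S₀_pos x hw hw1 hγ a).ne']
  exact sum_pos (fun i _ => by have := hw i; positivity) (univ_nonempty_of_sum_eq_one hw1)

end Myriad

open Myriad in
theorem myriad_filter_descent_general (n : ℕ) (x : Fin n → ℝ)
    (w : Fin n → ℝ) (hw : ∀ i, 0 < w i) (hw1 : ∑ i, w i = 1)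
    (γ : ℝ) (hγ : 0 < γ) (a : ℝ) :
    letI S₀ := ∑ i, w i * γ ^ 2 / ((x i - a) ^ 2 + γ ^ 2)
    letI S₁ := ∑ i, w i * (γ * (x i - a)) / ((x i - a) ^ 2 + γ ^ 2)
    letI Q := fun b : ℝ => ∑ i, w i * Real.log ((x i - b) ^ 2 + γ ^ 2)
    letI a' := a + γ * S₁ / S₀
    Q a' ≤ Q a ∧ (Q a' = Q a ↔ S₁ = 0) := by
  show Q x w γ (step x w γ a) ≤ Q x w γ a ∧
    (Q x w γ (step x w γ a) = Q x w γ a ↔ S₁ x w γ a = 0)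
  have hbound := Q_step_sub_Q_le x hw hw1 hγ.ne' a
  have hpos := one_sub_sq_S₁_div_S₀_pos x hw hw1 hγ.ne' a
  have hS₀ := S₀_pos x hw hw1 hγ.ne' a
  have hle_one : 1 - S₁ x w γ a ^ 2 / S₀ x w γ a ≤ 1 := sub_le_self _ (by positivity)
  refine ⟨by linarith [log_nonpos hpos.le hle_one], fun heq => ?_, fun h => by simp [step, h]⟩
  by_contra hS₁
  have hlt_one : 1 - S₁ x w γ a ^ 2 / S₀ x w γ a < 1 := sub_lt_self _ (by positivity)
  linarith [log_neg hpos hlt_one]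

/-- For the myriad filter update `a' = a + γ·S₁(a)/S₀(a)`, the objective
`Q(a) = Σᵢ wᵢ log((xᵢ-a)² + γ²)` does not increase, with equality iff `S₁(a) = 0`. -/
theorem myriad_filter_descent (n : ℕ) (hn : 2 ≤ n) (x : Fin n → ℝ)
    (hx : StrictMono x) (w : Fin n → ℝ) (hw : ∀ i, 0 < w i) (hw1 : ∑ i, w i = 1)
    (γ : ℝ) (hγ : 0 < γ) (a : ℝ) :
    letI S₀ := ∑ i, w i * γ ^ 2 / ((x i - a) ^ 2 + γ ^ 2)
    letI S₁ := ∑ i, w i * (γ * (x i - a)) / ((x i - a) ^ 2 + γ ^ 2)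
    letI Q := fun b : ℝ => ∑ i, w i * Real.log ((x i - b) ^ 2 + γ ^ 2)
    letI a' := a + γ * S₁ / S₀
    Q a' ≤ Q a ∧ (Q a' = Q a ↔ S₁ = 0) :=
  myriad_filter_descent_general n x w hw hw1 γ hγ a
end

section
/- Fix a ∈ ℝ, samples x₁ < ... < xₙ with n ≥ 3, weights wᵢ ∈ (0,1/2), Σwᵢ = 1, and let γ̂ be the unique positive solution of S₀(a,γ̂) = 1/2 where S₀(a,γ) = Σᵢ wᵢγ²/((xᵢ-a)²+γ²). Then the update γ'² = γ²·(1 − S₀(a,γ))/S₀(a,γ) is monotone toward γ̂: if γ < γ̂ then γ < γ' ≤ γ̂, and if γ > γ̂ then γ̂ ≤ γ' < γ; moreover γ' = γ if and only if γ = γ̂. -/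
open Finset Real

/-!
Write `s = γ²`, `t = γ̂²`, `s' = γ'²` and `S = S₀(a, γ)`. The update reads `s' S = s (1 - S)`, so
`S (s' - s) = 2s (S₀(a, γ̂) - S)` and `S (t - s') = s ∑ wᵢ (t - rᵢ)/(rᵢ + s)`. The first is
`t - s` times a positive factor because `S₀` is strictly increasing in `s`; the second is `t - s`
times a sum of squares, because the root condition `S₀(a, γ̂) = 1/2` can be subtracted off.
Hence `s'` moves from `s` toward `t` and never past it.
-/

variable {ι : Type*} [Fintype ι]

/-- `S₀(a, γ)` with `rᵢ = (xᵢ - a)²` and `s = γ²`. -/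
noncomputable def weightedCauchyRatio (w r : ι → ℝ) (s : ℝ) : ℝ :=
  ∑ i, w i * s / (r i + s)

variable {w r : ι → ℝ} {s t s' : ℝ}

lemma weightedCauchyRatio_pos (hw : ∀ i, 0 < w i) (hw1 : ∑ i, w i = 1) (hr : ∀ i, 0 ≤ r i)
    (hs : 0 < s) :
    0 < weightedCauchyRatio w r s := by
  have hne : (univ : Finset ι).Nonempty :=
    nonempty_of_sum_ne_zero (by rw [hw1]; exact one_ne_zero)
  exact sum_pos (fun i _ => by have := hw i; have := hr i; positivity) hne

lemma one_sub_weightedCauchyRatio (hw1 : ∑ i, w i = 1) (hr : ∀ i, 0 ≤ r i) (hs : 0 < s) :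
    1 - weightedCauchyRatio w r s = ∑ i, w i * r i / (r i + s) := by
  rw [← hw1, weightedCauchyRatio, ← sum_sub_distrib]
  refine sum_congr rfl fun i _ => ?_
  have := (add_pos_of_nonneg_of_pos (hr i) hs).ne'
  field_simp
  ring

lemma weightedCauchyRatio_sub_weightedCauchyRatio (hr : ∀ i, 0 ≤ r i) (hs : 0 < s) (ht : 0 < t) :
    weightedCauchyRatio w r t - weightedCauchyRatio w r s =
      (t - s) * ∑ i, w i * r i / ((r i + t) * (r i + s)) := by
  rw [weightedCauchyRatio, weightedCauchyRatio, ← sum_sub_distrib, mul_sum]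
  refine sum_congr rfl fun i _ => ?_
  have := (add_pos_of_nonneg_of_pos (hr i) hs).ne'
  have := (add_pos_of_nonneg_of_pos (hr i) ht).ne'
  field_simp
  ring

/-- The left side is the function `f` of the non-skipping argument. Subtracting `2t/(t+s)` times
`∑ wᵢ (t - rᵢ)/(rᵢ + t) = 2 S₀(t) - 1 = 0` turns it into `t - s` times a sum of squares. -/
lemma sum_sub_div_eq_of_weightedCauchyRatio_eq_half (hw1 : ∑ i, w i = 1) (hr : ∀ i, 0 ≤ r i)
    (hs : 0 < s) (ht : 0 < t) (hhalf : weightedCauchyRatio w r t = 1 / 2) :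
    ∑ i, w i * (t - r i) / (r i + s) =
      (t - s) * ∑ i, w i * (t - r i) ^ 2 / ((r i + s) * (r i + t) * (t + s)) := by
  have hroot : ∑ i, w i * (t - r i) / (r i + t) = 0 := calc
    _ = weightedCauchyRatio w r t - (1 - weightedCauchyRatio w r t) := by
      rw [one_sub_weightedCauchyRatio hw1 hr ht, weightedCauchyRatio, ← sum_sub_distrib]
      exact sum_congr rfl fun i _ => by ring
    _ = 0 := by rw [hhalf]; norm_num
  rw [← sub_zero (∑ i, _), ← mul_zero (2 * t / (t + s)), ← hroot, mul_sum, ← sum_sub_distrib,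
    mul_sum]
  refine sum_congr rfl fun i _ => ?_
  have := (add_pos_of_nonneg_of_pos (hr i) hs).ne'
  have := (add_pos_of_nonneg_of_pos (hr i) ht).ne'
  have := (add_pos ht hs).ne'
  field_simp
  ring

lemma mul_weightedCauchyRatio_sub_mul_one_sub (hw1 : ∑ i, w i = 1) (hr : ∀ i, 0 ≤ r i)
    (hs : 0 < s) :
    t * weightedCauchyRatio w r s - s * (1 - weightedCauchyRatio w r s) =
      s * ∑ i, w i * (t - r i) / (r i + s) := by
  rw [one_sub_weightedCauchyRatio hw1 hr hs, weightedCauchyRatio, mul_sum, mul_sum, mul_sum,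
    ← sum_sub_distrib]
  exact sum_congr rfl fun i _ => by ring

lemma sum_mul_div_pos_of_weightedCauchyRatio_eq_half (hw : ∀ i, 0 < w i) (hw1 : ∑ i, w i = 1)
    (hr : ∀ i, 0 ≤ r i) (hs : 0 < s) (ht : 0 < t) (hhalf : weightedCauchyRatio w r t = 1 / 2) :
    0 < ∑ i, w i * r i / ((r i + t) * (r i + s)) := by
  have hpos : ∑ _i : ι, (0 : ℝ) < ∑ i, w i * r i / (r i + t) := by
    rw [← one_sub_weightedCauchyRatio hw1 hr ht, hhalf, sum_const_zero]; norm_num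
  obtain ⟨j, -, hj⟩ := exists_lt_of_sum_lt hpos
  refine sum_pos' (fun i _ => by have := hw i; have := hr i; positivity) ⟨j, mem_univ j, ?_⟩
  rw [← div_div]
  exact div_pos hj (add_pos_of_nonneg_of_pos (hr j) hs)

theorem weightedCauchyRatio_update_monotone (hw : ∀ i, 0 < w i) (hw1 : ∑ i, w i = 1)
    (hr : ∀ i, 0 ≤ r i) (hs : 0 < s) (ht : 0 < t) (hhalf : weightedCauchyRatio w r t = 1 / 2)
    (hupd : s' * weightedCauchyRatio w r s = s * (1 - weightedCauchyRatio w r s)) :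
    ((s < t → s < s' ∧ s' ≤ t) ∧ (t < s → t ≤ s' ∧ s' < s)) ∧ (s' = s ↔ s = t) := by
  have hdiff := weightedCauchyRatio_sub_weightedCauchyRatio hr hs ht (w := w)
  have hgap := mul_weightedCauchyRatio_sub_mul_one_sub hw1 hr hs (t := t)
  rw [sum_sub_div_eq_of_weightedCauchyRatio_eq_half hw1 hr hs ht hhalf] at hgap
  have hS : 0 < weightedCauchyRatio w r s := weightedCauchyRatio_pos hw hw1 hr hs
  have hE := sum_mul_div_pos_of_weightedCauchyRatio_eq_half hw hw1 hr hs ht hhalf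
  have hD : 0 ≤ ∑ i, w i * (t - r i) ^ 2 / ((r i + s) * (r i + t) * (t + s)) :=
    sum_nonneg fun i _ => by have := (hw i).le; have := hr i; positivity
  set S := weightedCauchyRatio w r s
  set E := ∑ i, w i * r i / ((r i + t) * (r i + s))
  set D := ∑ i, w i * (t - r i) ^ 2 / ((r i + s) * (r i + t) * (t + s))
  have hupd_sub : s' - s = (t - s) * (2 * s * E / S) := by
    field_simp
    linear_combination hupd + 2 * s * hdiff - 2 * s * hhalf
  have hsub_upd : t - s' = (t - s) * (s * D / S) := by
    field_simp
    linear_combination hgap - hupd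
  have hE' : 0 < 2 * s * E / S := by positivity
  have hD' : 0 ≤ s * D / S := by positivity
  refine ⟨⟨fun hst => ⟨?_, ?_⟩, fun hts => ⟨?_, ?_⟩⟩, ⟨fun h => ?_, fun h => ?_⟩⟩
  · nlinarith [mul_pos (sub_pos.2 hst) hE']
  · nlinarith [mul_nonneg (sub_pos.2 hst).le hD']
  · nlinarith [mul_nonneg (sub_pos.2 hts).le hD']
  · nlinarith [mul_pos (sub_pos.2 hts) hE']
  · rw [h, sub_self, zero_eq_mul] at hupd_sub
    exact (sub_eq_zero.1 (hupd_sub.resolve_right hE'.ne')).symm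
  · subst h
    rwa [sub_self, zero_mul, sub_eq_zero] at hupd_sub


theorem scale_update_monotone_general (n : ℕ) (x : Fin n → ℝ)
    (w : Fin n → ℝ) (hw : ∀ i, 0 < w i)
    (hw1 : ∑ i, w i = 1) (a : ℝ) (ghat : ℝ) (hghat : 0 < ghat)
    (heq : (∑ i, w i * ghat ^ 2 / ((x i - a) ^ 2 + ghat ^ 2)) = 1 / 2)
    (γ : ℝ) (hγ : 0 < γ) (γ' : ℝ) (hγ' : 0 < γ')
    (hupd : γ' ^ 2 = γ ^ 2 * (1 - ∑ i, w i * γ ^ 2 / ((x i - a) ^ 2 + γ ^ 2)) /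
      (∑ i, w i * γ ^ 2 / ((x i - a) ^ 2 + γ ^ 2))) :
    ((γ < ghat → γ < γ' ∧ γ' ≤ ghat) ∧ (ghat < γ → ghat ≤ γ' ∧ γ' < γ)) ∧
    (γ' = γ ↔ γ = ghat) := by
  have hr : ∀ i, 0 ≤ (x i - a) ^ 2 := fun i => sq_nonneg _
  have hS := weightedCauchyRatio_pos hw hw1 hr (pow_pos hγ 2)
  have hsq := weightedCauchyRatio_update_monotone hw hw1 hr (pow_pos hγ 2) (pow_pos hghat 2) heq
    (s' := γ' ^ 2) (by rw [hupd]; exact div_mul_cancel₀ _ hS.ne')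
  simpa only [pow_lt_pow_iff_left₀, pow_le_pow_iff_left₀, pow_left_inj₀, hγ.le, hghat.le,
    hγ'.le, ne_eq, OfNat.ofNat_ne_zero, not_false_eq_true] using hsq

/-- Monotone convergence of the scale update `γ'² = γ²(1 − S₀(a,γ))/S₀(a,γ)`
toward the unique positive solution `γ̂` of `S₀(a,γ̂) = 1/2`. -/
theorem scale_update_monotone (n : ℕ) (hn : 3 ≤ n) (x : Fin n → ℝ)
    (hx : StrictMono x) (w : Fin n → ℝ) (hw : ∀ i, 0 < w i) (hwhalf : ∀ i, w i < 1 / 2)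
    (hw1 : ∑ i, w i = 1) (a : ℝ) (ghat : ℝ) (hghat : 0 < ghat)
    (heq : (∑ i, w i * ghat ^ 2 / ((x i - a) ^ 2 + ghat ^ 2)) = 1 / 2)
    (γ : ℝ) (hγ : 0 < γ) (γ' : ℝ) (hγ' : 0 < γ')
    (hupd : γ' ^ 2 = γ ^ 2 * (1 - ∑ i, w i * γ ^ 2 / ((x i - a) ^ 2 + γ ^ 2)) /
      (∑ i, w i * γ ^ 2 / ((x i - a) ^ 2 + γ ^ 2))) :
    ((γ < ghat → γ < γ' ∧ γ' ≤ ghat) ∧ (ghat < γ → ghat ≤ γ' ∧ γ' < γ)) ∧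
    (γ' = γ ↔ γ = ghat) :=
  scale_update_monotone_general n x w hw hw1 a ghat hghat heq γ hγ γ' hγ' hupd
end

section
/- Fix a ∈ ℝ and γ > 0, and define the deterministic sequences ã_{r+1} = ã_r + γ̃_r(a − ã_r)/(γ + γ̃_r) and γ̃_{r+1}² = γ̃_r(γ + (a − ã_r)²/(γ + γ̃_r)) from arbitrary ã₀ ∈ ℝ, γ̃₀ > 0. Then (ã_r, γ̃_r) → (a, γ) as r → ∞, with |ã_{r+1} − a| ≤ q|ã_r − a| where q = max{1/2, γ/(γ + γ̃₀)} < 1, and |γ̃_{r+1}² − γ²| ≤ q|γ̃_r² − γ²| + (a − ã_r)². -/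
open Filter Real

/-! Each step multiplies the location error by `γ / (γ + γ̃_r)` and satisfies
`γ̃_{r+1}² - γ² = γ/(γ+γ̃_r) (γ̃_r² - γ²) + γ̃_r/(γ+γ̃_r) (a - ã_r)²`.
Since `γ̃_r ≥ min γ̃₀ γ` for all `r`, both factors `γ / (γ + γ̃_r)` are at most `q`, so the
location error decays like `q^r` and, the forcing term being `O(q^r)`, the scale error
like `r q^r`. -/

theorem le_pow_mul_add_nat_mul_of_le_mul_add_pow {v : ℕ → ℝ} {q C : ℝ} (hq : 0 ≤ q)
    (h : ∀ n, v (n + 1) ≤ q * v n + q ^ (n + 1) * C) (n : ℕ) :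
    v n ≤ q ^ n * (v 0 + n * C) := by
  induction n with
  | zero => simp
  | succ n ih =>
    calc v (n + 1) ≤ q * v n + q ^ (n + 1) * C := h n
      _ ≤ q * (q ^ n * (v 0 + n * C)) + q ^ (n + 1) * C := by gcongr
      _ = q ^ (n + 1) * (v 0 + (n + 1 : ℕ) * C) := by push_cast; ring

theorem tendsto_pow_mul_add_nat_mul_atTop_nhds_zero {q : ℝ} (hq₀ : 0 ≤ q) (hq₁ : q < 1)
    (A C : ℝ) : Tendsto (fun n : ℕ => q ^ n * (A + n * C)) atTop (nhds 0) := by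
  have hgeom := (tendsto_pow_atTop_nhds_zero_of_lt_one hq₀ hq₁).mul_const A
  have hlin := (tendsto_self_mul_const_pow_of_lt_one hq₀ hq₁).mul_const C
  convert hgeom.add hlin using 1
  · ext n; ring
  · simp

theorem sq_le_pow_succ_mul_of_abs_le_pow_mul {x q c : ℝ} {r : ℕ} (hq₀ : 1 / 2 ≤ q)
    (hq₁ : q ≤ 1) (h : |x| ≤ q ^ r * c) : x ^ 2 ≤ q ^ (r + 1) * (2 * c ^ 2) := by
  have hqr₀ : 0 ≤ q ^ r := pow_nonneg (by linarith) r
  have hqr₁ : q ^ r ≤ 1 := pow_le_one₀ (by linarith) hq₁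
  calc x ^ 2 = |x| ^ 2 := (sq_abs x).symm
    _ ≤ (q ^ r * c) ^ 2 := pow_le_pow_left₀ (abs_nonneg x) h 2
    _ = q ^ r * (q ^ r * c ^ 2) := by ring
    _ ≤ q ^ r * (2 * q * c ^ 2) := by gcongr; nlinarith [sq_nonneg c]
    _ = q ^ (r + 1) * (2 * c ^ 2) := by ring

section Step

variable {a γ x g : ℝ}

theorem myriad_loc_step_sub (h : γ + g ≠ 0) :
    x + g * (a - x) / (γ + g) - a = γ / (γ + g) * (x - a) := by
  field_simp
  ring

theorem myriad_scale_step_sub (h : γ + g ≠ 0) (d : ℝ) :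
    g * (γ + d ^ 2 / (γ + g)) - γ ^ 2
      = γ / (γ + g) * (g ^ 2 - γ ^ 2) + g / (γ + g) * d ^ 2 := by
  field_simp
  ring

theorem sq_le_myriad_scale_step {m e : ℝ} (hm : 0 ≤ m) (hmg : m ≤ g) (hmγ : m ≤ γ)
    (hγg : 0 < γ + g) (he : 0 ≤ e) : m ^ 2 ≤ g * (γ + e / (γ + g)) := by
  have : 0 ≤ g * (e / (γ + g)) := mul_nonneg (hm.trans hmg) (by positivity)
  nlinarith [mul_le_mul hmg hmγ hm (hm.trans hmg)]

theorem div_add_le_max_half {g₀ : ℝ} (hγ : 0 < γ) (hg₀ : 0 < g₀) (hg : min g₀ γ ≤ g) :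
    γ / (γ + g) ≤ max (1 / 2) (γ / (γ + g₀)) := by
  rcases min_cases g₀ γ with ⟨hmin, -⟩ | ⟨hmin, -⟩ <;> rw [hmin] at hg
  · exact (div_le_div_of_nonneg_left hγ.le (by positivity) (by linarith)).trans
      (le_max_right _ _)
  · calc γ / (γ + g) ≤ γ / (γ + γ) :=
          div_le_div_of_nonneg_left hγ.le (by positivity) (by linarith)
      _ = 1 / 2 := by field_simp; ring
      _ ≤ _ := le_max_left _ _

theorem max_half_div_add_lt_one (hγ : 0 < γ) (hg : 0 < g) :
    max (1 / 2) (γ / (γ + g)) < 1 :=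
  max_lt (by norm_num) ((div_lt_one (by positivity)).2 (by linarith))

end Step

section Iteration

variable {a γ : ℝ} {ta tg : ℕ → ℝ}

theorem myriad_min_le_scale (htgpos : ∀ r, 0 < tg r)
    (hg : ∀ r, tg (r + 1) ^ 2 = tg r * (γ + (a - ta r) ^ 2 / (γ + tg r)))
    (hγ : 0 < γ) (r : ℕ) : min (tg 0) γ ≤ tg r := by
  induction r with
  | zero => exact min_le_left _ _
  | succ r ih =>
    have hm : 0 ≤ min (tg 0) γ := le_min (htgpos 0).le hγ.le
    have hsq : min (tg 0) γ ^ 2 ≤ tg (r + 1) ^ 2 := hg r ▸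
      sq_le_myriad_scale_step hm ih (min_le_right _ _) (by linarith [htgpos r]) (sq_nonneg _)
    exact (pow_le_pow_iff_left₀ hm (htgpos _).le two_ne_zero).1 hsq

theorem myriad_rate_le (hγ : 0 < γ) (htgpos : ∀ r, 0 < tg r)
    (hg : ∀ r, tg (r + 1) ^ 2 = tg r * (γ + (a - ta r) ^ 2 / (γ + tg r))) (r : ℕ) :
    γ / (γ + tg r) ≤ max (1 / 2) (γ / (γ + tg 0)) :=
  div_add_le_max_half hγ (htgpos 0) (myriad_min_le_scale htgpos hg hγ r)

theorem myriad_loc_contract (hγ : 0 < γ) (htgpos : ∀ r, 0 < tg r)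
    (ha : ∀ r, ta (r + 1) = ta r + tg r * (a - ta r) / (γ + tg r))
    (hg : ∀ r, tg (r + 1) ^ 2 = tg r * (γ + (a - ta r) ^ 2 / (γ + tg r))) (r : ℕ) :
    |ta (r + 1) - a| ≤ max (1 / 2) (γ / (γ + tg 0)) * |ta r - a| := by
  have hγg : 0 < γ + tg r := by linarith [htgpos r]
  rw [ha r, myriad_loc_step_sub hγg.ne', abs_mul, abs_of_nonneg (by positivity)]
  exact mul_le_mul_of_nonneg_right (myriad_rate_le hγ htgpos hg r) (abs_nonneg _)

theorem myriad_scale_contract (hγ : 0 < γ) (htgpos : ∀ r, 0 < tg r)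
    (hg : ∀ r, tg (r + 1) ^ 2 = tg r * (γ + (a - ta r) ^ 2 / (γ + tg r))) (r : ℕ) :
    |tg (r + 1) ^ 2 - γ ^ 2|
      ≤ max (1 / 2) (γ / (γ + tg 0)) * |tg r ^ 2 - γ ^ 2| + (a - ta r) ^ 2 := by
  have hγg : 0 < γ + tg r := by linarith [htgpos r]
  have hweight : tg r / (γ + tg r) ≤ 1 := (div_le_one hγg).2 (by linarith)
  rw [hg r, myriad_scale_step_sub hγg.ne']
  calc |γ / (γ + tg r) * (tg r ^ 2 - γ ^ 2) + tg r / (γ + tg r) * (a - ta r) ^ 2|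
      ≤ |γ / (γ + tg r) * (tg r ^ 2 - γ ^ 2)| + |tg r / (γ + tg r) * (a - ta r) ^ 2| :=
        abs_add_le _ _
    _ = γ / (γ + tg r) * |tg r ^ 2 - γ ^ 2| + tg r / (γ + tg r) * (a - ta r) ^ 2 := by
        rw [abs_mul, abs_mul, abs_of_nonneg (div_nonneg hγ.le hγg.le),
          abs_of_nonneg (div_nonneg (htgpos r).le hγg.le), abs_of_nonneg (sq_nonneg (a - ta r))]
    _ ≤ max (1 / 2) (γ / (γ + tg 0)) * |tg r ^ 2 - γ ^ 2| + 1 * (a - ta r) ^ 2 := by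
        gcongr
        exact myriad_rate_le hγ htgpos hg r
    _ = _ := by rw [one_mul]

end Iteration

theorem asymptotic_myriad_convergence_general (a γ : ℝ) (hγ : 0 < γ)
    (ta tg : ℕ → ℝ) (htgpos : ∀ r, 0 < tg r)
    (ha : ∀ r, ta (r + 1) = ta r + tg r * (a - ta r) / (γ + tg r))
    (hg : ∀ r, (tg (r + 1)) ^ 2 = tg r * (γ + (a - ta r) ^ 2 / (γ + tg r))) :
    Tendsto (fun r => (ta r, tg r)) atTop (nhds (a, γ)) ∧
    (∀ r, |ta (r + 1) - a| ≤ max (1 / 2) (γ / (γ + tg 0)) * |ta r - a|) ∧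
    max (1 / 2) (γ / (γ + tg 0)) < 1 ∧
    (∀ r, |(tg (r + 1)) ^ 2 - γ ^ 2| ≤
      max (1 / 2) (γ / (γ + tg 0)) * |(tg r) ^ 2 - γ ^ 2| + (a - ta r) ^ 2) := by
  set q := max (1 / 2) (γ / (γ + tg 0))
  have hq_half : 1 / 2 ≤ q := le_max_left _ _
  have hq₀ : 0 ≤ q := by linarith
  have hq₁ : q < 1 := max_half_div_add_lt_one hγ (htgpos 0)
  have hloc := myriad_loc_contract hγ htgpos ha hg
  have hscale := myriad_scale_contract hγ htgpos hg
  have hloc_geom (r : ℕ) : |ta r - a| ≤ q ^ r * |ta 0 - a| :=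
    le_geom (u := fun r => |ta r - a|) hq₀ r fun k _ => hloc k
  have hforcing (r : ℕ) : (a - ta r) ^ 2 ≤ q ^ (r + 1) * (2 * |ta 0 - a| ^ 2) :=
    sq_le_pow_succ_mul_of_abs_le_pow_mul hq_half hq₁.le (abs_sub_comm a (ta r) ▸ hloc_geom r)
  have hscale_bound (r : ℕ) :
      |tg r ^ 2 - γ ^ 2| ≤ q ^ r * (|tg 0 ^ 2 - γ ^ 2| + r * (2 * |ta 0 - a| ^ 2)) :=
    le_pow_mul_add_nat_mul_of_le_mul_add_pow (v := fun r => |tg r ^ 2 - γ ^ 2|) hq₀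
      (fun n => (hscale n).trans (by linarith [hforcing n])) r
  have hta : Tendsto ta atTop (nhds a) := by
    refine tendsto_iff_norm_sub_tendsto_zero.2
      (squeeze_zero (fun _ => norm_nonneg _) hloc_geom ?_)
    simpa using tendsto_pow_mul_add_nat_mul_atTop_nhds_zero hq₀ hq₁ |ta 0 - a| 0
  have htg_sq : Tendsto (fun r => tg r ^ 2) atTop (nhds (γ ^ 2)) :=
    tendsto_iff_norm_sub_tendsto_zero.2 (squeeze_zero (fun _ => norm_nonneg _) hscale_bound
      (tendsto_pow_mul_add_nat_mul_atTop_nhds_zero hq₀ hq₁ _ _))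
  have htg : Tendsto tg atTop (nhds γ) := by
    simpa [sqrt_sq (htgpos _).le, sqrt_sq hγ.le] using htg_sq.sqrt
  exact ⟨hta.prodMk_nhds htg, hloc, hq₁, hscale⟩

/-- The deterministic asymptotic myriad iteration converges linearly:
`(ã_r, γ̃_r) → (a, γ)` with `|ã_{r+1} − a| ≤ q|ã_r − a|`,
`q = max{1/2, γ/(γ + γ̃₀)}`, and
`|γ̃_{r+1}² − γ²| ≤ q|γ̃_r² − γ²| + (a − ã_r)²`. -/
theorem asymptotic_myriad_convergence (a γ : ℝ) (hγ : 0 < γ)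
    (ta tg : ℕ → ℝ) (htg0 : 0 < tg 0) (htgpos : ∀ r, 0 < tg r)
    (ha : ∀ r, ta (r + 1) = ta r + tg r * (a - ta r) / (γ + tg r))
    (hg : ∀ r, (tg (r + 1)) ^ 2 = tg r * (γ + (a - ta r) ^ 2 / (γ + tg r))) :
    Tendsto (fun r => (ta r, tg r)) atTop (nhds (a, γ)) ∧
    (∀ r, |ta (r + 1) - a| ≤ max (1 / 2) (γ / (γ + tg 0)) * |ta r - a|) ∧
    max (1 / 2) (γ / (γ + tg 0)) < 1 ∧
    (∀ r, |(tg (r + 1)) ^ 2 - γ ^ 2| ≤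
      max (1 / 2) (γ / (γ + tg 0)) * |(tg r) ^ 2 - γ ^ 2| + (a - ta r) ^ 2) :=
  asymptotic_myriad_convergence_general a γ hγ ta tg htgpos ha hg
end

section
/- Let ã₀ ∈ ℝ, γ̃₀ > 0, and consider the sequences ã_{r+1} = ã_r + γ̃_r(a − ã_r)/(γ + γ̃_r), γ̃_{r+1}² = γ̃_r(γ + (a − ã_r)²/(γ + γ̃_r)) with a ∈ ℝ, γ > 0. Then for all r: γ̃_{r+1}² ≥ min{γ̃_r², γ²}, and if ã_r < a then ã_r < ã_{r+1}, while if ã_r > a then ã_{r+1} < ã_r. -/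
open Real

/-- Basic properties of the deterministic asymptotic myriad iteration:
`γ̃_{r+1}² ≥ min{γ̃_r², γ²}` and strict monotone movement of `ã_r` toward `a`. -/
theorem asymptotic_myriad_basic_properties (a γ : ℝ) (hγ : 0 < γ)
    (ta tg : ℕ → ℝ) (htg0 : 0 < tg 0) (htgpos : ∀ r, 0 < tg r)
    (ha : ∀ r, ta (r + 1) = ta r + tg r * (a - ta r) / (γ + tg r))
    (hg : ∀ r, (tg (r + 1)) ^ 2 = tg r * (γ + (a - ta r) ^ 2 / (γ + tg r))) :
    ∀ r, (min ((tg r) ^ 2) (γ ^ 2) ≤ (tg (r + 1)) ^ 2) ∧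
      (ta r < a → ta r < ta (r + 1)) ∧ (a < ta r → ta (r + 1) < ta r) := by
  intro r
  have hg' := htgpos r
  have hsum : 0 < γ + tg r := by linarith
  refine ⟨?_, ?_, ?_⟩
  · have h1 : tg r * γ ≤ (tg (r + 1)) ^ 2 := by
      rw [hg r]
      have : 0 ≤ (a - ta r) ^ 2 / (γ + tg r) := by positivity
      nlinarith
    rcases le_total (tg r) γ with h | h
    · have : min ((tg r) ^ 2) (γ ^ 2) ≤ tg r * γ := by
        refine le_trans (min_le_left _ _) ?_
        nlinarith
      linarith
    · have : min ((tg r) ^ 2) (γ ^ 2) ≤ tg r * γ := by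
        refine le_trans (min_le_right _ _) ?_
        nlinarith
      linarith
  · intro h
    rw [ha r]
    have : 0 < tg r * (a - ta r) / (γ + tg r) := by
      apply div_pos _ hsum
      exact mul_pos hg' (by linarith)
    linarith
  · intro h
    rw [ha r]
    have : tg r * (a - ta r) / (γ + tg r) < 0 := by
      apply div_neg_of_neg_of_pos _ hsum
      exact mul_neg_of_pos_of_neg hg' (by linarith)
    linarith
end
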